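/- arXiv:2206.11725 — 8 statements merged into one kernel-verified Lean document; each statement's English description precedes it below -/
import Mathlib

section
/- Let n ≥ 1, let w be a word over 𝒜_n, let k ∈ ℕ with 1 ≤ k, and let s_k be an index with k ≤ s_k ≤ |w|. If ↑^{k−1}_w(s_k) = a for some letter a ∈ 𝒜_n, then there exist indices s_1 < s_2 < ⋯ < s_k ≤ |w| such that w_{s_1} > w_{s_2} > ⋯ > w_{s_k} (i.e. w_{s_1}, …, w_{s_k} is a strictly decreasing subsequence of w), w_{s_1} = a, and ↑^{l−1}_w(s_l) = a for every l with 1 < l ≤ k. -/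
/-- The (max-plus) tropical semiring carrier: ℝ ∪ {-∞}. -/
abbrev Trop : Type := WithBot ℝ

/-- Tropical (max-plus) matrix multiplication. -/
def tmul {m : ℕ} (A B : Matrix (Fin m) (Fin m) Trop) : Matrix (Fin m) (Fin m) Trop :=
  fun i j => Finset.univ.sup fun k => A i k + B k j

/-- The tropical identity matrix. -/
def tropId (m : ℕ) : Matrix (Fin m) (Fin m) Trop :=
  fun i j => if i = j then (0 : Trop) else ⊥

/-- Tropical matrix power. -/
def tpow {m : ℕ} (A : Matrix (Fin m) (Fin m) Trop) : ℕ → Matrix (Fin m) (Fin m) Trop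
  | 0 => tropId m
  | k + 1 => tmul A (tpow A k)

/-- A matrix is upper unitriangular if its diagonal entries are 0 (the tropical one)
and its entries below the diagonal are -∞ (the tropical zero). -/
def IsUnitriangular {m : ℕ} (A : Matrix (Fin m) (Fin m) Trop) : Prop :=
  (∀ i, A i i = 0) ∧ ∀ i j : Fin m, j < i → A i j = ⊥

/-- For a letter `x` of `𝒜_n` (represented by `x : Fin n`, standing for the letter `x.val + 1`),
`bar x` is the matrix index corresponding to `x̄ = n + 1 - (x.val + 1)`
(indices `1, …, n+1` being represented by `Fin (n+1)`, index `i` as value `i - 1`). -/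
def bar {n : ℕ} (x : Fin n) : Fin (n + 1) := ⟨n - 1 - x.val, by omega⟩

/-- The image of a letter under ρ_n. -/
def letterMat {n : ℕ} (x : Fin n) : Matrix (Fin (n + 1)) (Fin (n + 1)) Trop :=
  fun i j => if i = j then (0 : Trop) else if i ≤ bar x ∧ bar x < j then (1 : Trop) else ⊥

/-- The homomorphism ρ_n on words over 𝒜_n. -/
def rhoList {n : ℕ} : List (Fin n) → Matrix (Fin (n + 1)) (Fin (n + 1)) Trop
  | [] => tropId (n + 1)
  | x :: xs => tmul (letterMat x) (rhoList xs)

/-- The defining relations of the stylic monoid: the Knuth relations together with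
idempotency of the generators. Letters of `𝒜_n` are `Fin n` with its order. -/
inductive StylRel (n : ℕ) : FreeMonoid (Fin n) → FreeMonoid (Fin n) → Prop
  | knuth₁ (a b c : Fin n) : a ≤ b → b < c →
      StylRel n (.of a * .of c * .of b) (.of c * .of a * .of b)
  | knuth₂ (a b c : Fin n) : a < b → b ≤ c →
      StylRel n (.of b * .of a * .of c) (.of b * .of c * .of a)
  | idem (a : Fin n) : StylRel n (.of a * .of a) (.of a)

/-- The stylic congruence on 𝒜_n^*. -/
def stylCon (n : ℕ) : Con (FreeMonoid (Fin n)) := conGen (StylRel n)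

/-- The stylic monoid of rank n. -/
abbrev Styl (n : ℕ) := (stylCon n).Quotient

/-- A monoid `M` satisfies the identity `u ≈ v` if every evaluation of the variables
in `M` gives `u` and `v` the same value. -/
def Satisfies (M : Type*) [Monoid M] {σ : Type*} (u v : FreeMonoid σ) : Prop :=
  ∀ φ : FreeMonoid σ →* M, φ u = φ v

/-- `up B a` is the smallest letter of `B` strictly greater than `a`
(`none` playing the role of ε). -/
def up {n : ℕ} (B : Finset (Fin n)) (a : Fin n) : Option (Fin n) :=
  if h : (B.filter fun b => a < b).Nonempty then some ((B.filter fun b => a < b).min' h)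
  else none

/-- The map δ: `δ(ε) = ε` and `δ(w·a) = δ(w) · a↑_{supp w}`. -/
def delta {n : ℕ} (w : List (Fin n)) : List (Fin n) :=
  (List.range w.length).filterMap fun i => w[i]?.bind (up (w.take i).toFinset)

/-- The "arrow" maps: `arrow w 0 i = w_i`, and
`arrow w l i = (arrow w (l-1) i)↑_{supp(δ^{l-1}(w_{≤ i}))}` (positions 0-indexed). -/
def arrow {n : ℕ} (w : List (Fin n)) : ℕ → ℕ → Option (Fin n)
  | 0, i => w[i]?
  | k + 1, i => (arrow w k i).bind (up (delta^[k] (w.take (i + 1))).toFinset)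

/-- `w` has a strictly decreasing subsequence of length `k` all of whose letters `a`
satisfy `i ≤ ā < j`. -/
def HasDecrSubseq {n : ℕ} (w : List (Fin n)) (i j : Fin (n + 1)) (k : ℕ) : Prop :=
  ∃ (s : Fin k → ℕ) (hs : ∀ l, s l < w.length),
    StrictMono s ∧
    (∀ l m : Fin k, l < m → w[s m]'(hs m) < w[s l]'(hs l)) ∧
    ∀ l : Fin k, i ≤ bar (w[s l]'(hs l)) ∧ bar (w[s l]'(hs l)) < j

/-- The involution on words: reverse and replace each letter `a` by `n + 1 - a`. -/
def wordStar {n : ℕ} (w : List (Fin n)) : List (Fin n) :=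
  w.reverse.map fun a => ⟨n - 1 - a.val, by have := a.isLt; omega⟩

/-- Skew transposition of an `(m+1) × (m+1)` tropical matrix. -/
def skewT {m : ℕ} (A : Matrix (Fin (m + 1)) (Fin (m + 1)) Trop) :
    Matrix (Fin (m + 1)) (Fin (m + 1)) Trop :=
  fun i j => A ⟨m - j.val, by omega⟩ ⟨m - i.val, by omega⟩

/-!
Write `S_m(p) = supp δ^m(w_{≤ p})`. Unfolding `δ` shows `S_m(p) = {↑^m_w(q) | q ≤ p}`, so a value
`a = ↑^{m+1}_w(i)` is already a value `↑^m_w(j) = a` at some `j < i`; take `j` to be the last such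
position. Then `w_i < w_j`, by induction on `m`: suppose `↑^m_w(j) = a > b = ↑^m_w(i)`, `a` does not
recur at level `m` strictly between `j` and `i`, and `a = c↑_{S_{m-1}(j)}`. No position `p` strictly
between `j` and `i` has `↑^{m-1}_w(p) ∈ [c, a)`: otherwise `↑^m_w(p)` lies strictly between
`↑^{m-1}_w(p)` and `a`, and being in `S_{m-1}(p)` but, by minimality of `a`, not in `S_{m-1}(j)`, it
is the level-`(m-1)` value of an earlier position after `j`; this cannot go on forever. Hence
`↑^{m-1}_w(i) < c` and `c` does not recur between `j` and `i` at level `m - 1`, which is the same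
situation one level down. Repeating the step `k - 1` times from `s_k = i` gives the chain.
-/

section Arrow

variable {n : ℕ}

theorem up_eq_some_iff {B : Finset (Fin n)} {a y : Fin n} :
    up B a = some y ↔ a < y ∧ y ∈ B ∧ ∀ z ∈ B, a < z → y ≤ z := by
  unfold up
  constructor
  · intro h
    split_ifs at h with hne
    obtain rfl := Option.some.inj h
    have hmem := Finset.mem_filter.1 (Finset.min'_mem _ hne)
    exact ⟨hmem.2, hmem.1, fun z hz haz => Finset.min'_le _ z (Finset.mem_filter.2 ⟨hz, haz⟩)⟩
  · rintro ⟨hay, hyB, hmin⟩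
    have hne : (B.filter fun b => a < b).Nonempty := ⟨y, Finset.mem_filter.2 ⟨hyB, hay⟩⟩
    rw [dif_pos hne, Option.some_inj]
    exact le_antisymm (Finset.min'_le _ y (Finset.mem_filter.2 ⟨hyB, hay⟩))
      (Finset.le_min' _ _ _ fun z hz => hmin z (Finset.mem_filter.1 hz).1
        (Finset.mem_filter.1 hz).2)

theorem exists_up_eq_some_le {B : Finset (Fin n)} {a x : Fin n} (hx : x ∈ B) (hax : a < x) :
    ∃ y, up B a = some y ∧ y ≤ x := by
  have hne : (B.filter fun b => a < b).Nonempty := ⟨x, Finset.mem_filter.2 ⟨hx, hax⟩⟩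
  exact ⟨_, dif_pos hne, Finset.min'_le _ x (Finset.mem_filter.2 ⟨hx, hax⟩)⟩

theorem up_insert_self (B : Finset (Fin n)) (a : Fin n) : up (insert a B) a = up B a := by
  simp only [up, Finset.filter_insert, lt_irrefl, if_false]

theorem delta_append_singleton (u : List (Fin n)) (x : Fin n) :
    delta (u ++ [x]) = delta u ++ (up u.toFinset x).toList := by
  unfold delta
  rw [List.length_append, List.length_singleton, List.range_succ, List.filterMap_append]
  congr 1
  · refine List.filterMap_congr fun i hi => ?_
    have hi : i < u.length := List.mem_range.1 hi
    rw [List.getElem?_append_left hi, List.take_append_of_le_length hi.le]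
  · cases h : up u.toFinset x <;> simp [h]

theorem filterMap_range_getElem? (u : List (Fin n)) (N : ℕ) :
    (List.range N).filterMap (u[·]?) = u.take N := by
  induction N with
  | zero => simp
  | succ N ih => rw [List.range_succ, List.filterMap_append, ih, List.take_add_one]; rfl

def arrowSupp (w : List (Fin n)) (m p : ℕ) : Finset (Fin n) :=
  (delta^[m] (w.take (p + 1))).toFinset

theorem arrow_succ (w : List (Fin n)) (m p : ℕ) :
    arrow w (m + 1) p = (arrow w m p).bind (up (arrowSupp w m p)) := rfl

theorem delta_iterate_take (w : List (Fin n)) (m N : ℕ) :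
    delta^[m] (w.take N) = (List.range N).filterMap (arrow w m) := by
  induction m generalizing N with
  | zero => exact (filterMap_range_getElem? w N).symm
  | succ m ih =>
    rw [Function.iterate_succ_apply', ih]
    induction N with
    | zero => simp [delta]
    | succ N ihN =>
      rw [List.range_succ, List.filterMap_append, List.filterMap_append, ← ihN]
      cases h : arrow w m N with
      | none => simp [arrow_succ, h]
      | some x =>
        have hup : arrow w (m + 1) N = up ((List.range N).filterMap (arrow w m)).toFinset x := by
          rw [arrow_succ, h, Option.bind_some, arrowSupp, ih, List.range_succ,
            List.filterMap_append, List.toFinset_append]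
          simp [h, up_insert_self]
        have hx : [N].filterMap (arrow w m) = [x] := by simp [h]
        rw [hx, delta_append_singleton]
        cases h' : up ((List.range N).filterMap (arrow w m)).toFinset x <;> simp [hup, h']

theorem mem_arrowSupp {w : List (Fin n)} {m p : ℕ} {x : Fin n} :
    x ∈ arrowSupp w m p ↔ ∃ q ≤ p, arrow w m q = some x := by
  simp [arrowSupp, delta_iterate_take]

theorem arrowSupp_mono (w : List (Fin n)) (m : ℕ) : Monotone (arrowSupp w m) :=
  fun _ _ h _ hx =>
    let ⟨q, hq, hqx⟩ := mem_arrowSupp.1 hx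
    mem_arrowSupp.2 ⟨q, hq.trans h, hqx⟩

theorem lt_length_of_arrow_eq_some {w : List (Fin n)} {m p : ℕ} {x : Fin n}
    (h : arrow w m p = some x) : p < w.length := by
  induction m generalizing x with
  | zero => exact (List.getElem?_eq_some_iff.1 h).1
  | succ m ih =>
    rw [arrow_succ, Option.bind_eq_some_iff] at h
    obtain ⟨c, hc, -⟩ := h
    exact ih hc

theorem arrow_notMem_Ico {w : List (Fin n)} {m j i : ℕ} {c a : Fin n}
    (hca : up (arrowSupp w m j) c = some a)
    (hgap : ∀ q, j < q → q < i → arrow w (m + 1) q ≠ some a) :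
    ∀ p, j < p → p < i → ∀ e, arrow w m p = some e → e ∉ Set.Ico c a := by
  obtain ⟨-, haS, hmin⟩ := up_eq_some_iff.1 hca
  intro p
  induction p using Nat.strong_induction_on with
  | _ p ih =>
    rintro hjp hpi e hpe ⟨hce, hea⟩
    have haS : a ∈ arrowSupp w m p := arrowSupp_mono w m hjp.le haS
    obtain ⟨e', hee', he'a⟩ := exists_up_eq_some_le haS hea
    obtain ⟨he_lt, he'S, -⟩ := up_eq_some_iff.1 hee'
    have he'a : e' < a := he'a.lt_of_ne fun h =>
      hgap p hjp hpi (by rw [arrow_succ, hpe, Option.bind_some, hee', h])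
    obtain ⟨p', hp'p, hp'⟩ := mem_arrowSupp.1 he'S
    have hjp' : j < p' := lt_of_not_ge fun hp'j =>
      (hmin e' (mem_arrowSupp.2 ⟨p', hp'j, hp'⟩) (hce.trans_lt he_lt)).not_gt he'a
    have hp'p : p' < p := hp'p.lt_of_ne <| by
      rintro rfl
      exact he_lt.ne (Option.some.inj (hpe.symm.trans hp'))
    exact ih p' hp'p hjp' (hp'p.trans hpi) e' hp' ⟨hce.trans he_lt.le, he'a⟩

theorem getElem_lt_getElem_of_arrow {w : List (Fin n)} (m : ℕ) {j i : ℕ} {a b : Fin n}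
    (hja : arrow w m j = some a) (hib : arrow w m i = some b) (hba : b < a)
    (hgap : ∀ q, j < q → q < i → arrow w m q ≠ some a) (hj : j < w.length) (hi : i < w.length) :
    w[i] < w[j] := by
  induction m generalizing a b with
  | zero =>
    simp only [arrow, List.getElem?_eq_getElem hj, List.getElem?_eq_getElem hi,
      Option.some_inj] at hja hib
    rwa [hja, hib]
  | succ m ih =>
    rw [arrow_succ, Option.bind_eq_some_iff] at hja hib
    obtain ⟨c, hc, hca⟩ := hja
    obtain ⟨d, hd, hdb⟩ := hib
    obtain ⟨hc_lt, -, hmin⟩ := up_eq_some_iff.1 hca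
    obtain ⟨hd_lt, hbS, -⟩ := up_eq_some_iff.1 hdb
    have hnot := arrow_notMem_Ico hca hgap
    have hdc : d < c := by
      by_contra! hcd
      obtain ⟨p, hpi, hp⟩ := mem_arrowSupp.1 hbS
      have hjp : j < p := lt_of_not_ge fun hpj =>
        (hmin b (mem_arrowSupp.2 ⟨p, hpj, hp⟩) (hcd.trans_lt hd_lt)).not_gt hba
      have hpi : p < i := hpi.lt_of_ne <| by
        rintro rfl
        exact hd_lt.ne (Option.some.inj (hd.symm.trans hp))
      exact hnot p hjp hpi b hp ⟨hcd.trans hd_lt.le, hba⟩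
    exact ih hc hd hdc fun q hjq hqi hqc => hnot q hjq hqi c hqc ⟨le_rfl, hc_lt⟩

theorem exists_lt_arrow_eq_and_getElem_lt {w : List (Fin n)} {m i : ℕ} {a : Fin n}
    (hia : arrow w (m + 1) i = some a) :
    ∃ j < i, arrow w m j = some a ∧ ∀ (hj : j < w.length) (hi : i < w.length), w[i] < w[j] := by
  rw [arrow_succ, Option.bind_eq_some_iff] at hia
  obtain ⟨b, hb, hba⟩ := hia
  obtain ⟨hb_lt, haS, -⟩ := up_eq_some_iff.1 hba
  obtain ⟨j₀, hj₀i, hj₀⟩ := mem_arrowSupp.1 haS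
  have hj₀i : j₀ < i := hj₀i.lt_of_ne <| by
    rintro rfl
    exact hb_lt.ne (Option.some.inj (hb.symm.trans hj₀))
  let T := (Finset.range i).filter (arrow w m · = some a)
  obtain ⟨j, hjT, hjmax⟩ :=
    T.exists_max_image id ⟨j₀, Finset.mem_filter.2 ⟨Finset.mem_range.2 hj₀i, hj₀⟩⟩
  obtain ⟨hji, hja⟩ := Finset.mem_filter.1 hjT
  refine ⟨j, Finset.mem_range.1 hji, hja, getElem_lt_getElem_of_arrow m hja hb hb_lt ?_⟩
  exact fun q hjq hqi hqa =>
    (hjmax q (Finset.mem_filter.2 ⟨Finset.mem_range.2 hqi, hqa⟩)).not_gt hjq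

theorem exists_arrow_chain {w : List (Fin n)} {a : Fin n} (k : ℕ) {i : ℕ}
    (ha : arrow w k i = some a) :
    ∃ s : Fin (k + 1) → ℕ, StrictMono s ∧ s (Fin.last k) = i ∧
      (∀ l : Fin (k + 1), arrow w l (s l) = some a) ∧
      ∀ (l : Fin k) (h : s l.castSucc < w.length) (h' : s l.succ < w.length),
        w[s l.succ] < w[s l.castSucc] := by
  induction k generalizing i with
  | zero =>
    refine ⟨fun _ => i, Fin.strictMono_iff_lt_succ.2 fun l => l.elim0, rfl, fun l => ?_,
      fun l => l.elim0⟩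
    rwa [Fin.fin_one_eq_zero l]
  | succ k ih =>
    obtain ⟨j, hji, hja, hlt⟩ := exists_lt_arrow_eq_and_getElem_lt ha
    obtain ⟨s, hs, hlast, harr, hdec⟩ := ih hja
    refine ⟨Fin.snoc s i, ?_, Fin.snoc_last _ _, fun l => ?_, fun l => ?_⟩
    · simpa [Fin.insertNth_last'] using Fin.strictMono_insertNth_last hs i (hlast ▸ hji)
    · induction l using Fin.lastCases with
      | last => simpa using ha
      | cast l => simpa using harr l
    · induction l using Fin.lastCases with
      | last => simpa [hlast] using hlt
      | cast l =>
        simp only [Fin.succ_castSucc, Fin.snoc_castSucc]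
        exact hdec l

end Arrow

/-- If `↑^{k-1}_w(s_k) = a` (positions 0-indexed: `i = s_k - 1`), then there is a
strictly decreasing subsequence `w_{s_1} > ⋯ > w_{s_k}` of `w` with `w_{s_1} = a`,
ending at the given position, and `↑^{l-1}_w(s_l) = a` for all `1 < l ≤ k`. -/
theorem arrow_gives_decreasing_subsequence
    (n : ℕ) (w : List (Fin n)) (k : ℕ) (hk : 1 ≤ k)
    (i : ℕ) (a : Fin n)
    (ha : arrow w (k - 1) i = some a) :
    ∃ (s : Fin k → ℕ) (hs : ∀ l, s l < w.length),
      StrictMono s ∧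
      s ⟨k - 1, by omega⟩ = i ∧
      (∀ l m : Fin k, l < m → w[s m]'(hs m) < w[s l]'(hs l)) ∧
      w[s ⟨0, by omega⟩]'(hs ⟨0, by omega⟩) = a ∧
      (∀ l : Fin k, 1 ≤ l.val → arrow w l.val (s l) = some a) := by
  obtain ⟨k, rfl⟩ : ∃ k', k = k' + 1 := ⟨k - 1, by omega⟩
  obtain ⟨s, hmono, hlast, harr, hdec⟩ := exists_arrow_chain k ha
  have hs l : s l < w.length := lt_length_of_arrow_eq_some (harr l)
  have hanti : StrictAnti fun l => w[s l]'(hs l) :=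
    Fin.strictAnti_iff_succ_lt.2 fun l => hdec l _ _
  refine ⟨s, hs, hmono, hlast, fun l m hlm => hanti hlm, ?_, fun l _ => harr l⟩
  simpa [arrow, List.getElem?_eq_getElem (hs 0)] using harr 0
end

section
/- Let n ≥ 1, let w be a word over 𝒜_n, let 1 ≤ i < j ≤ n+1 and let k ∈ ℕ with k ≥ 1. Then ρ_n(w)_{i,j} = k if and only if k is the maximum length of a strictly decreasing subsequence of w all of whose letters a satisfy i ≤ n+1−a < j. Moreover, ρ_n(w)_{i,j} = −∞ if and only if w contains no letter a with i ≤ n+1−a < j. -/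
/-!
`ρ_n(x w)_{i,j} = max_k ρ_n(x)_{i,k} + ρ_n(w)_{k,j}`, and the only nonzero finite entries of
`ρ_n(x)` are the jumps `i ≤ x̄ < k`, of weight 1. The longest strictly decreasing subsequence of
`x w` with letters in the band `[i, j)` obeys the same recursion: either it skips `x`, or it
starts with `x` (so `x̄ ∈ [i, j)`) and continues with letters in the band `[x̄ + 1, j)`. Both
recursions agree once an off-diagonal entry with no usable letter is read as `-∞` rather than 0.
-/

section

variable {n : ℕ}

theorem bar_lt_bar_iff {a b : Fin n} : bar a < bar b ↔ b < a := by
  simp only [bar, Fin.lt_def]; omega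

theorem bar_lt_iff_rev_succ_le {x : Fin n} {k : Fin (n + 1)} : bar x < k ↔ x.rev.succ ≤ k := by
  simp only [bar, Fin.lt_def, Fin.le_def, Fin.val_succ, Fin.val_rev]; omega

def IsDecrIn (i j : Fin (n + 1)) (l : List (Fin n)) : Prop :=
  l.Pairwise (· > ·) ∧ ∀ a ∈ l, i ≤ bar a ∧ bar a < j

theorem isDecrIn_cons {i j : Fin (n + 1)} {a : Fin n} {l : List (Fin n)} :
    IsDecrIn i j (a :: l) ↔ (i ≤ bar a ∧ bar a < j) ∧ IsDecrIn a.rev.succ j l := by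
  simp only [IsDecrIn, List.pairwise_cons, List.forall_mem_cons, ← bar_lt_iff_rev_succ_le]
  constructor
  · rintro ⟨⟨hlt, hl⟩, ha, hrange⟩
    exact ⟨ha, hl, fun b hb => ⟨bar_lt_bar_iff.2 (hlt b hb), (hrange b hb).2⟩⟩
  · rintro ⟨ha, hl, hrange⟩
    exact ⟨⟨fun b hb => bar_lt_bar_iff.1 (hrange b hb).1, hl⟩, ha,
      fun b hb => ⟨ha.1.trans (hrange b hb).1.le, (hrange b hb).2⟩⟩

theorem hasDecrSubseq_iff {w : List (Fin n)} {i j : Fin (n + 1)} {k : ℕ} :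
    HasDecrSubseq w i j k ↔ ∃ l, l.Sublist w ∧ l.length = k ∧ IsDecrIn i j l := by
  constructor
  · rintro ⟨s, hs, hmono, hdec, hrange⟩
    let is := List.ofFn fun t => (⟨s t, hs t⟩ : Fin w.length)
    refine ⟨is.map (w[·]), List.map_getElem_sublist (List.pairwise_ofFn.2 fun _ _ h => hmono h),
      by simp [is], ?_⟩
    simp only [is, List.map_ofFn, IsDecrIn, List.pairwise_ofFn, List.mem_ofFn]
    refine ⟨fun a b h => hdec a b h, ?_⟩
    rintro _ ⟨t, rfl⟩
    exact hrange t
  · rintro ⟨l, hl, rfl, hdecr, hrange⟩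
    obtain ⟨f, hf⟩ := List.sublist_iff_exists_fin_orderEmbedding_get_eq.1 hl
    have hget (t : Fin l.length) : w[(f t : ℕ)] = l[t] := (hf t).symm
    refine ⟨fun t => f t, fun t => (f t).isLt, fun a b h => f.strictMono h, fun a b h => ?_,
      fun t => ?_⟩
    · simp only [hget]
      exact List.pairwise_iff_getElem.1 hdecr a b a.isLt b.isLt h
    · simp only [hget]
      exact hrange _ (List.getElem_mem _)

/-- `x.rev.succ` is the index `x̄ + 1`, as `bar x = x.rev.castSucc`; a decreasing subsequence
starting with `x` continues in the band `[x̄ + 1, j)`. -/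
def maxDecrLen : List (Fin n) → Fin (n + 1) → Fin (n + 1) → ℕ
  | [], _, _ => 0
  | x :: xs, i, j =>
      if i ≤ bar x ∧ bar x < j then max (maxDecrLen xs i j) (maxDecrLen xs x.rev.succ j + 1)
      else maxDecrLen xs i j

theorem maxDecrLen_le_maxDecrLen_cons (x : Fin n) (xs : List (Fin n)) (i j : Fin (n + 1)) :
    maxDecrLen xs i j ≤ maxDecrLen (x :: xs) i j := by
  rw [maxDecrLen]; split_ifs <;> omega

theorem length_le_maxDecrLen {w l : List (Fin n)} {i j : Fin (n + 1)} (hl : l.Sublist w)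
    (hdecr : IsDecrIn i j l) : l.length ≤ maxDecrLen w i j := by
  induction w generalizing l i with
  | nil => simp [List.sublist_nil.1 hl]
  | cons x xs ih =>
    rcases List.sublist_cons_iff.1 hl with hl | ⟨r, rfl, hr⟩
    · exact (ih hl hdecr).trans (maxDecrLen_le_maxDecrLen_cons x xs i j)
    · obtain ⟨hx, hdecr⟩ := isDecrIn_cons.1 hdecr
      simp only [maxDecrLen, if_pos hx, List.length_cons]
      exact le_max_of_le_right (Nat.succ_le_succ (ih hr hdecr))

theorem exists_sublist_length_eq_maxDecrLen (w : List (Fin n)) (i j : Fin (n + 1)) :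
    ∃ l, l.Sublist w ∧ l.length = maxDecrLen w i j ∧ IsDecrIn i j l := by
  induction w generalizing i with
  | nil => exact ⟨[], List.Sublist.slnil, rfl, by simp [IsDecrIn]⟩
  | cons x xs ih =>
    obtain ⟨l, hl, hlen, hdecr⟩ := ih i
    obtain ⟨r, hr, hrlen, hrdecr⟩ := ih x.rev.succ
    by_cases hx : i ≤ bar x ∧ bar x < j
    · rcases le_total (maxDecrLen xs i j) (maxDecrLen xs x.rev.succ j + 1) with h | h
      · exact ⟨x :: r, hr.cons_cons x, by simp [maxDecrLen, hx, h, hrlen],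
          isDecrIn_cons.2 ⟨hx, hrdecr⟩⟩
      · exact ⟨l, hl.cons x, by simp [maxDecrLen, hx, h, hlen], hdecr⟩
    · exact ⟨l, hl.cons x, by simp [maxDecrLen, hx, hlen], hdecr⟩

theorem isGreatest_maxDecrLen (w : List (Fin n)) (i j : Fin (n + 1)) :
    IsGreatest {k | HasDecrSubseq w i j k} (maxDecrLen w i j) := by
  refine ⟨hasDecrSubseq_iff.2 (exists_sublist_length_eq_maxDecrLen w i j), ?_⟩
  rintro k hk
  obtain ⟨l, hl, rfl, hdecr⟩ := hasDecrSubseq_iff.1 hk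
  exact length_le_maxDecrLen hl hdecr

theorem maxDecrLen_eq_zero_iff {w : List (Fin n)} {i j : Fin (n + 1)} :
    maxDecrLen w i j = 0 ↔ ∀ x ∈ w, ¬(i ≤ bar x ∧ bar x < j) := by
  constructor
  · intro h x hx hxij
    have := length_le_maxDecrLen (List.singleton_sublist.2 hx) (by simpa [IsDecrIn] using hxij)
    simp [h] at this
  · intro h
    obtain ⟨l, hl, hlen, hdecr⟩ := exists_sublist_length_eq_maxDecrLen w i j
    rw [← hlen, List.length_eq_zero_iff, List.eq_nil_iff_forall_not_mem]
    exact fun a ha => h a (hl.subset ha) (hdecr.2 a ha)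

theorem maxDecrLen_antitone_left {w : List (Fin n)} {i i' j : Fin (n + 1)} (h : i ≤ i') :
    maxDecrLen w i' j ≤ maxDecrLen w i j := by
  obtain ⟨l, hl, hlen, hdecr, hrange⟩ := exists_sublist_length_eq_maxDecrLen w i' j
  exact hlen ▸ length_le_maxDecrLen hl
    ⟨hdecr, fun a ha => ⟨h.trans (hrange a ha).1, (hrange a ha).2⟩⟩

theorem maxDecrLen_self (w : List (Fin n)) (j : Fin (n + 1)) : maxDecrLen w j j = 0 :=
  maxDecrLen_eq_zero_iff.2 fun _ _ h => (h.1.trans_lt h.2).false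

def maxDecrEntry (w : List (Fin n)) (i j : Fin (n + 1)) : Trop :=
  if i = j ∨ maxDecrLen w i j ≠ 0 then ((maxDecrLen w i j : ℝ) : Trop) else ⊥

theorem maxDecrEntry_self (w : List (Fin n)) (j : Fin (n + 1)) : maxDecrEntry w j j = 0 := by
  simp [maxDecrEntry, maxDecrLen_self]

theorem maxDecrEntry_of_ne_zero {w : List (Fin n)} {i j : Fin (n + 1)}
    (h : maxDecrLen w i j ≠ 0) :
    maxDecrEntry w i j = ((maxDecrLen w i j : ℝ) : Trop) := by
  simp [maxDecrEntry, h]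

theorem maxDecrEntry_of_lt {w : List (Fin n)} {i j : Fin (n + 1)} (h : j < i) :
    maxDecrEntry w i j = ⊥ := by
  have hlen : maxDecrLen w i j = 0 :=
    maxDecrLen_eq_zero_iff.2 fun _ _ hx => (h.trans_le (hx.1.trans hx.2.le)).false
  simp [maxDecrEntry, h.ne', hlen]

theorem maxDecrEntry_le (w : List (Fin n)) (i j : Fin (n + 1)) :
    maxDecrEntry w i j ≤ ((maxDecrLen w i j : ℝ) : Trop) := by
  unfold maxDecrEntry; split_ifs <;> simp

theorem max_maxDecrEntry_zero {w : List (Fin n)} {i j : Fin (n + 1)} (h : i ≤ j) :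
    max (maxDecrEntry w i j) 0 = ((maxDecrLen w i j : ℝ) : Trop) := by
  rcases h.eq_or_lt with rfl | hlt
  · simp [maxDecrEntry_self, maxDecrLen_self]
  · by_cases hlen : maxDecrLen w i j = 0
    · simp [maxDecrEntry, hlt.ne, hlen]
    · rw [maxDecrEntry_of_ne_zero hlen, max_eq_left (mod_cast Nat.zero_le _)]

theorem maxDecrEntry_le_maxDecrEntry_cons (x : Fin n) (xs : List (Fin n)) (i j : Fin (n + 1)) :
    maxDecrEntry xs i j ≤ maxDecrEntry (x :: xs) i j := by
  have hle := maxDecrLen_le_maxDecrLen_cons x xs i j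
  unfold maxDecrEntry
  split_ifs <;> first | exact bot_le | exact_mod_cast hle | omega

theorem letterMat_add_maxDecrEntry_le (x : Fin n) (xs : List (Fin n)) (i k j : Fin (n + 1)) :
    letterMat x i k + maxDecrEntry xs k j ≤ maxDecrEntry (x :: xs) i j := by
  unfold letterMat
  split_ifs with hik hx
  · rw [hik, zero_add]
    exact maxDecrEntry_le_maxDecrEntry_cons x xs k j
  · rcases lt_or_ge j k with hjk | hkj
    · rw [maxDecrEntry_of_lt hjk, WithBot.add_bot]
      exact bot_le
    have hxj : bar x < j := hx.2.trans_le hkj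
    have hlen : maxDecrLen xs x.rev.succ j + 1 ≤ maxDecrLen (x :: xs) i j := by
      simp [maxDecrLen, hx.1, hxj]
    rw [maxDecrEntry_of_ne_zero (show maxDecrLen (x :: xs) i j ≠ 0 by omega)]
    calc 1 + maxDecrEntry xs k j ≤ 1 + ((maxDecrLen xs k j : ℝ) : Trop) := by
          gcongr; exact maxDecrEntry_le xs k j
      _ ≤ 1 + ((maxDecrLen xs x.rev.succ j : ℝ) : Trop) := by
          gcongr; exact_mod_cast maxDecrLen_antitone_left (bar_lt_iff_rev_succ_le.1 hx.2)
      _ ≤ _ := by rw [add_comm]; exact_mod_cast hlen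
  · rw [WithBot.bot_add]
    exact bot_le

theorem maxDecrEntry_cons_le_sup (x : Fin n) (xs : List (Fin n)) (i j : Fin (n + 1)) :
    maxDecrEntry (x :: xs) i j ≤
      Finset.univ.sup fun k => letterMat x i k + maxDecrEntry xs k j := by
  set S := Finset.univ.sup fun k => letterMat x i k + maxDecrEntry xs k j
  have hS (k : Fin (n + 1)) : letterMat x i k + maxDecrEntry xs k j ≤ S :=
    Finset.le_sup (f := fun k => letterMat x i k + maxDecrEntry xs k j) (Finset.mem_univ k)
  have hstay : maxDecrEntry xs i j ≤ S := by simpa [letterMat] using hS i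
  by_cases hx : i ≤ bar x ∧ bar x < j
  swap
  · have : maxDecrEntry (x :: xs) i j = maxDecrEntry xs i j := by
      simp [maxDecrEntry, maxDecrLen, hx]
    exact this ▸ hstay
  have hjump {k : Fin (n + 1)} (hk : bar x < k) : 1 + maxDecrEntry xs k j ≤ S := by
    have : letterMat x i k = 1 := by simp [letterMat, (hx.1.trans_lt hk).ne, hx.1, hk]
    exact this ▸ hS k
  -- the jump straight to `j` gives `1 + 0`, which stands in for an empty band above `x̄`
  have hone : (1 : Trop) ≤ S := by simpa [maxDecrEntry_self] using hjump hx.2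
  have hsucc : x.rev.succ ≤ j := bar_lt_iff_rev_succ_le.1 hx.2
  rw [maxDecrEntry_of_ne_zero (by simp [maxDecrLen, hx])]
  simp only [maxDecrLen, if_pos hx, Nat.cast_max, WithBot.coe_max]
  refine max_le ?_ ?_
  · rw [← max_maxDecrEntry_zero (hx.1.trans_lt hx.2).le]
    exact max_le hstay (zero_le_one.trans hone)
  · rw [Nat.cast_succ, WithBot.coe_add, ← max_maxDecrEntry_zero hsucc, add_comm, WithBot.coe_one,
      ← max_add_add_left, add_zero]
    exact max_le (hjump (bar_lt_iff_rev_succ_le.2 le_rfl)) hone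

theorem rhoList_apply (w : List (Fin n)) (i j : Fin (n + 1)) :
    rhoList w i j = maxDecrEntry w i j := by
  induction w generalizing i j with
  | nil => by_cases h : i = j <;> simp [rhoList, tropId, maxDecrEntry, maxDecrLen, h]
  | cons x xs ih =>
    simp only [rhoList, tmul, ih]
    exact le_antisymm (Finset.sup_le fun k _ => letterMat_add_maxDecrEntry_le x xs i k j)
      (maxDecrEntry_cons_le_sup x xs i j)

theorem maxDecrEntry_eq_coe_iff {w : List (Fin n)} {i j : Fin (n + 1)} {k : ℕ} (hk : k ≠ 0) :
    maxDecrEntry w i j = ((k : ℝ) : Trop) ↔ maxDecrLen w i j = k := by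
  unfold maxDecrEntry
  split_ifs with h
  · simp
  · have := (not_or.1 h).2
    simp only [WithBot.bot_ne_coe, false_iff]
    omega

theorem maxDecrEntry_eq_bot_iff {w : List (Fin n)} {i j : Fin (n + 1)} (hij : i ≠ j) :
    maxDecrEntry w i j = ⊥ ↔ maxDecrLen w i j = 0 := by
  simp [maxDecrEntry, hij]

end

theorem rho_entry_characterization_general
    (n : ℕ) (w : List (Fin n)) (i j : Fin (n + 1)) (hij : i < j)
    (k : ℕ) (hk : 1 ≤ k) :
    (rhoList w i j = ((k : ℝ) : Trop) ↔
      HasDecrSubseq w i j k ∧ ∀ m : ℕ, HasDecrSubseq w i j m → m ≤ k) ∧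
    (rhoList w i j = ⊥ ↔
      ∀ (l : ℕ) (hl : l < w.length), ¬ (i ≤ bar (w[l]'hl) ∧ bar (w[l]'hl) < j)) := by
  rw [rhoList_apply, maxDecrEntry_eq_coe_iff (by omega), maxDecrEntry_eq_bot_iff hij.ne,
    maxDecrLen_eq_zero_iff, List.forall_mem_iff_getElem]
  have hgreatest := isGreatest_maxDecrLen w i j
  exact ⟨⟨fun h => h ▸ ⟨hgreatest.1, fun m hm => hgreatest.2 hm⟩,
    fun h => hgreatest.unique ⟨h.1, fun m hm => h.2 m hm⟩⟩, Iff.rfl⟩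

/-- For `1 ≤ i < j ≤ n+1` and `k ≥ 1`, the entry `ρ_n(w)_{i,j}` equals `k` iff `k`
is the maximum length of a strictly decreasing subsequence of `w` using only letters `a` with
`i ≤ ā < j`; and it equals `-∞` iff `w` has no letter `a` with `i ≤ ā < j`. -/
theorem rho_entry_characterization
    (n : ℕ) (hn : 1 ≤ n) (w : List (Fin n)) (i j : Fin (n + 1)) (hij : i < j)
    (k : ℕ) (hk : 1 ≤ k) :
    (rhoList w i j = ((k : ℝ) : Trop) ↔
      HasDecrSubseq w i j k ∧ ∀ m : ℕ, HasDecrSubseq w i j m → m ≤ k) ∧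
    (rhoList w i j = ⊥ ↔
      ∀ (l : ℕ) (hl : l < w.length), ¬ (i ≤ bar (w[l]'hl) ∧ bar (w[l]'hl) < j)) :=
  rho_entry_characterization_general n w i j hij k hk
end

section
/- Let n ≥ 1 and let w be a word over 𝒜_n. Then every entry of the matrix ρ_n(w) is at most n, i.e. ρ_n(w)_{i,j} ≤ n for all 1 ≤ i, j ≤ n+1. -/
/-! The entry `ρ(w)ᵢⱼ` is at most `j - i`: a letter matrix has this property because its only
positive entries, equal to `1`, lie strictly above the diagonal, and the bound `A i j ≤ f j - f i`
survives tropical products because the potential differences telescope. -/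

section PotentialBound

variable {m : ℕ} (f : Fin m → ℝ)

theorem tropId_le_sub (i j : Fin m) : tropId m i j ≤ ((f j - f i : ℝ) : Trop) := by
  unfold tropId
  split_ifs with h
  · simp [h]
  · exact bot_le

theorem tmul_le_sub {A B : Matrix (Fin m) (Fin m) Trop}
    (hA : ∀ i j, A i j ≤ ((f j - f i : ℝ) : Trop)) (hB : ∀ i j, B i j ≤ ((f j - f i : ℝ) : Trop))
    (i j : Fin m) : tmul A B i j ≤ ((f j - f i : ℝ) : Trop) :=
  Finset.sup_le fun k _ =>
    calc A i k + B k j ≤ ((f k - f i : ℝ) : Trop) + ((f j - f k : ℝ) : Trop) :=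
          add_le_add (hA i k) (hB k j)
      _ = ((f j - f i : ℝ) : Trop) := by rw [← WithBot.coe_add]; ring_nf

end PotentialBound

theorem letterMat_le_sub {n : ℕ} (x : Fin n) (i j : Fin (n + 1)) :
    letterMat x i j ≤ (((j : ℝ) - (i : ℝ)) : Trop) := by
  unfold letterMat
  split_ifs with hij hx
  · simp [hij]
  · have hlt : (i : ℕ) + 1 ≤ j := Fin.lt_def.mp (hx.1.trans_lt hx.2)
    have : (1 : ℝ) ≤ (j : ℝ) - (i : ℝ) := by
      have : ((i : ℕ) : ℝ) + 1 ≤ ((j : ℕ) : ℝ) := by exact_mod_cast hlt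
      linarith
    exact_mod_cast this
  · exact bot_le

theorem rhoList_le_sub {n : ℕ} (w : List (Fin n)) (i j : Fin (n + 1)) :
    rhoList w i j ≤ (((j : ℝ) - (i : ℝ)) : Trop) := by
  induction w generalizing i j with
  | nil => exact tropId_le_sub (fun k : Fin (n + 1) => (k : ℝ)) i j
  | cons x xs ih => exact tmul_le_sub (fun k : Fin (n + 1) => (k : ℝ)) (letterMat_le_sub x) ih i j

theorem rho_entry_le_general (n : ℕ) (w : List (Fin n)) (i j : Fin (n + 1)) :
    rhoList w i j ≤ ((n : ℝ) : Trop) := by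
  have hj : ((j : ℕ) : ℝ) ≤ n := by exact_mod_cast Nat.lt_succ_iff.mp j.isLt
  have hi : (0 : ℝ) ≤ (i : ℕ) := Nat.cast_nonneg _
  have hsub : (j : ℝ) - (i : ℝ) ≤ n := by linarith
  exact (rhoList_le_sub w i j).trans (by exact_mod_cast hsub)

/-- Every entry of `ρ_n(w)` is at most `n`. -/
theorem rho_entry_le (n : ℕ) (hn : 1 ≤ n) (w : List (Fin n)) (i j : Fin (n + 1)) :
    rhoList w i j ≤ ((n : ℝ) : Trop) :=
  rho_entry_le_general n w i j
end

section
/- Let n ≥ 1 and let w be a word over 𝒜_n. Any two finite adjacent entries of ρ_n(w) differ by at most 1, the entries weakly increase along rows and weakly decrease down columns: for indices 1 ≤ i ≤ j ≤ n+1, if ρ_n(w)_{i,j} and ρ_n(w)_{i+1,j} are both finite then ρ_n(w)_{i+1,j} ≤ ρ_n(w)_{i,j} ≤ ρ_n(w)_{i+1,j} + 1, and if ρ_n(w)_{i,j} and ρ_n(w)_{i,j+1} are both finite then ρ_n(w)_{i,j} ≤ ρ_n(w)_{i,j+1} ≤ ρ_n(w)_{i,j} + 1. -/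
/-!
For `i < j` the entry `ρ_n(w)_{i,j}` is the length of the longest strictly decreasing
subsequence of `w` whose letters `a` satisfy `i ≤ ā < j`, and `-∞` when there is none; the
diagonal is `0`. Moving `i` or `j` by one adds or removes a single value of `ā`, which
contributes at most one letter to a strictly decreasing subsequence.
-/

/-- Along a strictly decreasing subsequence the values `ā` strictly increase, so the recursion
either skips the first letter `x` or uses it and continues with `i := x̄ + 1`. -/
def decrLen {n : ℕ} : List (Fin n) → ℕ → ℕ → ℕ
  | [], _, _ => 0
  | x :: xs, i, j =>
    max (decrLen xs i j)
      (if i ≤ (bar x : ℕ) ∧ (bar x : ℕ) < j then decrLen xs (bar x + 1) j + 1 else 0)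

section decrLen

variable {n : ℕ}

theorem decrLen_eq_zero_of_le (w : List (Fin n)) {i j : ℕ} (h : j ≤ i) : decrLen w i j = 0 := by
  induction w with
  | nil => rfl
  | cons x xs ih =>
    simp only [decrLen, ih]
    split_ifs <;> omega

theorem lt_of_decrLen_ne_zero {w : List (Fin n)} {i j : ℕ} (h : decrLen w i j ≠ 0) : i < j := by
  by_contra hji
  exact h (decrLen_eq_zero_of_le w (not_lt.1 hji))

theorem decrLen_le_cons (x : Fin n) (xs : List (Fin n)) (i j : ℕ) :
    decrLen xs i j ≤ decrLen (x :: xs) i j :=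
  le_max_left _ _

theorem decrLen_succ_bar_add_one_le_cons (x : Fin n) (xs : List (Fin n)) {i j : ℕ}
    (hi : i ≤ bar x) (hj : (bar x : ℕ) < j) :
    decrLen xs (bar x + 1) j + 1 ≤ decrLen (x :: xs) i j := by
  simp only [decrLen, if_pos (And.intro hi hj)]
  exact le_max_right _ _

theorem decrLen_antitone_left (w : List (Fin n)) {i i' j : ℕ} (h : i ≤ i') :
    decrLen w i' j ≤ decrLen w i j := by
  induction w generalizing i i' with
  | nil => exact le_rfl
  | cons x xs ih =>
    have := ih h
    simp only [decrLen]
    split_ifs <;> omega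

theorem decrLen_monotone_right (w : List (Fin n)) {i j j' : ℕ} (h : j ≤ j') :
    decrLen w i j ≤ decrLen w i j' := by
  induction w generalizing i with
  | nil => exact le_rfl
  | cons x xs ih =>
    have := @ih i
    have := @ih (bar x + 1)
    simp only [decrLen]
    split_ifs <;> omega

theorem decrLen_le_succ_left (w : List (Fin n)) (i j : ℕ) :
    decrLen w i j ≤ decrLen w (i + 1) j + 1 := by
  induction w generalizing i with
  | nil => exact Nat.zero_le _
  | cons x xs ih =>
    have := ih i
    simp only [decrLen]
    rcases le_or_gt i (bar x) with hb | hb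
    · have := decrLen_antitone_left xs (j := j) (Nat.add_le_add_right hb 1)
      split_ifs <;> omega
    · split_ifs <;> omega

theorem decrLen_succ_right_le (w : List (Fin n)) (i j : ℕ) :
    decrLen w i (j + 1) ≤ decrLen w i j + 1 := by
  induction w generalizing i with
  | nil => exact Nat.zero_le _
  | cons x xs ih =>
    have := ih i
    have := ih (bar x + 1)
    have := decrLen_eq_zero_of_le xs (le_refl (j + 1))
    simp only [decrLen]
    split_ifs <;> try omega
    obtain rfl : (bar x : ℕ) = j := by omega
    omega

end decrLen

/-- The closed form of `ρ_n(w)`. Since `decrLen w i i = 0`, the diagonal needs no case of its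
own. -/
def decrEntry {n : ℕ} (w : List (Fin n)) (i j : Fin (n + 1)) : Trop :=
  if i = j ∨ decrLen w i j ≠ 0 then (decrLen w i j : Trop) else ⊥

section decrEntry

variable {n : ℕ}

theorem decrEntry_of_finite {w : List (Fin n)} {i j : Fin (n + 1)}
    (h : i = j ∨ decrLen w i j ≠ 0) : decrEntry w i j = decrLen w i j :=
  if_pos h

theorem decrEntry_of_not_finite {w : List (Fin n)} {i j : Fin (n + 1)}
    (h : ¬(i = j ∨ decrLen w i j ≠ 0)) : decrEntry w i j = ⊥ :=
  if_neg h

theorem natCast_le_decrEntry {w : List (Fin n)} {i j : Fin (n + 1)} {d : ℕ}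
    (hd : d ≤ decrLen w i j) (hfin : i = j ∨ d ≠ 0) : (d : Trop) ≤ decrEntry w i j := by
  rw [decrEntry_of_finite (by omega)]
  exact_mod_cast hd

theorem decrEntry_le_cons (x : Fin n) (xs : List (Fin n)) (i j : Fin (n + 1)) :
    decrEntry xs i j ≤ decrEntry (x :: xs) i j := by
  by_cases h : i = j ∨ decrLen xs i j ≠ 0
  · rw [decrEntry_of_finite h]
    exact natCast_le_decrEntry (decrLen_le_cons x xs i j) h
  · rw [decrEntry_of_not_finite h]
    exact bot_le

theorem exists_decrEntry_eq_decrLen_succ (w : List (Fin n)) {b j : Fin (n + 1)} (h : b < j) :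
    ∃ k, b < k ∧ decrEntry w k j = decrLen w ((b : ℕ) + 1) j := by
  by_cases h0 : decrLen w ((b : ℕ) + 1) j = 0
  · refine ⟨j, h, ?_⟩
    simp [decrEntry, h0, decrLen_eq_zero_of_le]
  · refine ⟨⟨b + 1, by omega⟩, Fin.lt_def.2 (Nat.lt_succ_self _), ?_⟩
    simp [decrEntry, h0]

theorem letterMat_of_le_of_lt (x : Fin n) {i k : Fin (n + 1)} (hi : i ≤ bar x) (hk : bar x < k) :
    letterMat x i k = 1 := by
  rw [letterMat, if_neg (hi.trans_lt hk).ne, if_pos ⟨hi, hk⟩]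

theorem letterMat_add_decrEntry_le (x : Fin n) (xs : List (Fin n)) (i k j : Fin (n + 1)) :
    letterMat x i k + decrEntry xs k j ≤ decrEntry (x :: xs) i j := by
  by_cases hik : i = k
  · subst hik
    simpa [letterMat] using decrEntry_le_cons x xs i j
  by_cases hx : i ≤ bar x ∧ bar x < k
  · rw [letterMat_of_le_of_lt x hx.1 hx.2]
    by_cases hfin : k = j ∨ decrLen xs k j ≠ 0
    · have hkj : (k : ℕ) ≤ j := by
        rcases hfin with rfl | h
        · exact le_rfl
        · exact (lt_of_decrLen_ne_zero h).le
      have hle : decrLen xs k j + 1 ≤ decrLen (x :: xs) i j :=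
        (Nat.add_le_add_right (decrLen_antitone_left xs (Fin.lt_def.1 hx.2)) 1).trans
          (decrLen_succ_bar_add_one_le_cons x xs hx.1 (by have := Fin.lt_def.1 hx.2; omega))
      rw [decrEntry_of_finite hfin, add_comm]
      exact_mod_cast natCast_le_decrEntry hle (Or.inr (Nat.succ_ne_zero _))
    · simp [decrEntry_of_not_finite hfin]
  · simp [letterMat, hik, hx]

theorem exists_decrEntry_cons_le (x : Fin n) (xs : List (Fin n)) (i j : Fin (n + 1)) :
    ∃ k, decrEntry (x :: xs) i j ≤ letterMat x i k + decrEntry xs k j := by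
  by_cases hx : i ≤ bar x ∧ bar x < j ∧ decrLen xs i j < decrLen xs (bar x + 1) j + 1
  · obtain ⟨hi, hj, hlt⟩ := hx
    obtain ⟨k, hk, hentry⟩ := exists_decrEntry_eq_decrLen_succ xs hj
    refine ⟨k, ?_⟩
    have hlen : decrLen (x :: xs) i j = decrLen xs (bar x + 1) j + 1 := by
      have hcond : (i : ℕ) ≤ bar x ∧ (bar x : ℕ) < j := ⟨hi, hj⟩
      simp only [decrLen, if_pos hcond]
      omega
    rw [letterMat_of_le_of_lt x hi hk, hentry,
      decrEntry_of_finite (Or.inr (hlen ▸ Nat.succ_ne_zero _)), hlen]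
    push_cast
    rw [add_comm]
  · refine ⟨i, ?_⟩
    have hlen : decrLen (x :: xs) i j = decrLen xs i j := by
      simp only [decrLen]
      split_ifs <;> omega
    simp only [letterMat, if_true, zero_add, decrEntry, hlen]
    exact le_rfl

end decrEntry

theorem rhoList_eq_decrEntry {n : ℕ} (w : List (Fin n)) : rhoList w = decrEntry w := by
  induction w with
  | nil =>
    funext i j
    by_cases h : i = j <;> simp [rhoList, tropId, decrEntry, decrLen, h]
  | cons x xs ih =>
    funext i j
    obtain ⟨k, hk⟩ := exists_decrEntry_cons_le x xs i j
    simp only [rhoList, ih, tmul]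
    exact le_antisymm (Finset.sup_le fun k _ => letterMat_add_decrEntry_le x xs i k j)
      (hk.trans (Finset.le_sup (f := fun k => letterMat x i k + decrEntry xs k j)
        (Finset.mem_univ k)))

theorem rhoList_eq_decrLen_of_ne_bot {n : ℕ} {w : List (Fin n)} {i j : Fin (n + 1)}
    (h : rhoList w i j ≠ ⊥) : rhoList w i j = decrLen w i j := by
  rw [rhoList_eq_decrEntry] at h ⊢
  by_cases hfin : i = j ∨ decrLen w i j ≠ 0
  · exact decrEntry_of_finite hfin
  · exact absurd (decrEntry_of_not_finite hfin) h

theorem rho_adjacent_entries_general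
    (n : ℕ) (w : List (Fin n)) (i j : Fin (n + 1)) :
    (∀ (h : i.val + 1 < n + 1),
      rhoList w i j ≠ ⊥ → rhoList w ⟨i.val + 1, h⟩ j ≠ ⊥ →
        rhoList w ⟨i.val + 1, h⟩ j ≤ rhoList w i j ∧
        rhoList w i j ≤ rhoList w ⟨i.val + 1, h⟩ j + 1) ∧
    (∀ (h : j.val + 1 < n + 1),
      rhoList w i j ≠ ⊥ → rhoList w i ⟨j.val + 1, h⟩ ≠ ⊥ →
        rhoList w i j ≤ rhoList w i ⟨j.val + 1, h⟩ ∧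
        rhoList w i ⟨j.val + 1, h⟩ ≤ rhoList w i j + 1) := by
  refine ⟨fun _ hfin hfin' => ?_, fun _ hfin hfin' => ?_⟩
  · rw [rhoList_eq_decrLen_of_ne_bot hfin, rhoList_eq_decrLen_of_ne_bot hfin']
    exact ⟨by exact_mod_cast decrLen_antitone_left w (Nat.le_succ i),
      by exact_mod_cast decrLen_le_succ_left w i j⟩
  · rw [rhoList_eq_decrLen_of_ne_bot hfin, rhoList_eq_decrLen_of_ne_bot hfin']
    exact ⟨by exact_mod_cast decrLen_monotone_right w (Nat.le_succ j),
      by exact_mod_cast decrLen_succ_right_le w i j⟩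

/-- Finite adjacent entries of `ρ_n(w)` differ by at most 1; entries weakly
increase along rows and weakly decrease down columns. -/
theorem rho_adjacent_entries
    (n : ℕ) (hn : 1 ≤ n) (w : List (Fin n)) (i j : Fin (n + 1)) (hij : i ≤ j) :
    (∀ (h : i.val + 1 < n + 1),
      rhoList w i j ≠ ⊥ → rhoList w ⟨i.val + 1, h⟩ j ≠ ⊥ →
        rhoList w ⟨i.val + 1, h⟩ j ≤ rhoList w i j ∧
        rhoList w i j ≤ rhoList w ⟨i.val + 1, h⟩ j + 1) ∧
    (∀ (h : j.val + 1 < n + 1),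
      rhoList w i j ≠ ⊥ → rhoList w i ⟨j.val + 1, h⟩ ≠ ⊥ →
        rhoList w i j ≤ rhoList w i ⟨j.val + 1, h⟩ ∧
        rhoList w i ⟨j.val + 1, h⟩ ≤ rhoList w i j + 1) :=
  rho_adjacent_entries_general n w i j
end

section
/- Let n ≥ 1. For all words u, v over 𝒜_n, if u ≡_styl v then ρ_n(u) = ρ_n(v); consequently ρ_n induces a well-defined monoid homomorphism ϱ_n : styl_n → U_{n+1}(𝕋). -/
/-!
Write `N_u` (`stepMat u`) for the matrix with entry `1` exactly where `i ≤ u < j`, so that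
`ρ(x) = 1 ⊕ N_{x̄}`. A product `N_u N_v` is `2` where `i ≤ u < v < j` and `-∞` elsewhere,
so it vanishes when `v ≤ u`. Expanding a product of three generators, both sides of a Knuth
relation reduce to the same tropical sum, except for one summand `N_w N_u` that is dominated
by another summand; idempotency is `N_u N_u = -∞`. As `ρ` is a monoid homomorphism killing
the defining relations, it factors through the stylic congruence.
-/

lemma Trop.add_finset_sup {ι : Type*} (c : Trop) (s : Finset ι) (f : ι → Trop) :
    c + s.sup f = s.sup fun k => c + f k :=
  Finset.apply_sup_eq_sup_comp_of_linearOrder (c + ·) (fun _ _ h => add_le_add_right h c)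
    (WithBot.add_bot c)

lemma Trop.finset_sup_add {ι : Type*} (c : Trop) (s : Finset ι) (f : ι → Trop) :
    s.sup f + c = s.sup fun k => f k + c := by
  simp only [add_comm _ c, Trop.add_finset_sup]

section TropicalMatrices

variable {m : ℕ}

lemma tmul_assoc (A B C : Matrix (Fin m) (Fin m) Trop) :
    tmul (tmul A B) C = tmul A (tmul B C) := by
  funext i j
  simp only [tmul, Trop.finset_sup_add, Trop.add_finset_sup, add_assoc]
  exact Finset.sup_comm _ _ _

lemma tropId_tmul (A : Matrix (Fin m) (Fin m) Trop) : tmul (tropId m) A = A := by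
  funext i j
  refine le_antisymm (Finset.sup_le fun k _ => ?_) (Finset.le_sup_of_le (Finset.mem_univ i) ?_)
  · by_cases h : i = k <;> simp [tropId, h]
  · simp [tropId]

lemma tmul_tropId (A : Matrix (Fin m) (Fin m) Trop) : tmul A (tropId m) = A := by
  funext i j
  refine le_antisymm (Finset.sup_le fun k _ => ?_) (Finset.le_sup_of_le (Finset.mem_univ j) ?_)
  · by_cases h : k = j <;> simp [tropId, h]
  · simp [tropId]

end TropicalMatrices

/-- A type synonym, so that `*` can be the tropical product without clashing with the
ordinary product of `Matrix`; `⊔` is the tropical sum. -/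
def TropMat (m : ℕ) : Type := Matrix (Fin m) (Fin m) Trop

namespace TropMat

variable {m : ℕ}

instance : Monoid (TropMat m) where
  mul := tmul
  one := tropId m
  mul_assoc := tmul_assoc
  one_mul := tropId_tmul
  mul_one := tmul_tropId

instance : SemilatticeSup (TropMat m) := inferInstanceAs (SemilatticeSup (Fin m → Fin m → Trop))

instance : OrderBot (TropMat m) := inferInstanceAs (OrderBot (Fin m → Fin m → Trop))

lemma one_apply (i j : Fin m) : (1 : TropMat m) i j = tropId m i j := rfl

lemma mul_apply (A B : TropMat m) (i j : Fin m) :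
    (A * B) i j = Finset.univ.sup fun k => A i k + B k j := rfl

lemma sup_apply (A B : TropMat m) (i j : Fin m) : (A ⊔ B) i j = A i j ⊔ B i j := rfl

lemma bot_apply (i j : Fin m) : (⊥ : TropMat m) i j = ⊥ := rfl

lemma mul_sup (A B C : TropMat m) : A * (B ⊔ C) = A * B ⊔ A * C := by
  funext i j
  simp only [mul_apply, sup_apply, ← Finset.sup_sup]
  exact Finset.sup_congr rfl fun k _ => (max_add_add_left _ _ _).symm

lemma sup_mul (A B C : TropMat m) : (A ⊔ B) * C = A * C ⊔ B * C := by
  funext i j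
  simp only [mul_apply, sup_apply, ← Finset.sup_sup]
  exact Finset.sup_congr rfl fun k _ => (max_add_add_right _ _ _).symm

lemma bot_mul (A : TropMat m) : ⊥ * A = ⊥ := by
  funext i j
  simp [mul_apply, bot_apply]

lemma mul_bot (A : TropMat m) : A * ⊥ = ⊥ := by
  funext i j
  simp [mul_apply, bot_apply]

lemma one_sup_mul_one_sup (A B : TropMat m) : (1 ⊔ A) * (1 ⊔ B) = 1 ⊔ A ⊔ B ⊔ A * B := by
  simp only [mul_sup, sup_mul, one_mul, mul_one]
  ac_rfl

lemma one_sup_mul_one_sup_mul_one_sup (A B C : TropMat m) :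
    (1 ⊔ A) * (1 ⊔ B) * (1 ⊔ C) = 1 ⊔ A ⊔ B ⊔ C ⊔ A * B ⊔ A * C ⊔ B * C ⊔ A * B * C := by
  simp only [mul_sup, sup_mul, one_mul, mul_one, mul_assoc]
  ac_rfl

def stepMat (u : Fin m) : TropMat m := fun i j => if i ≤ u ∧ u < j then 1 else ⊥

lemma stepMat_mul_stepMat_apply (u v i j : Fin m) :
    (stepMat u * stepMat v) i j = if i ≤ u ∧ u < v ∧ v < j then 2 else ⊥ := by
  simp only [mul_apply, stepMat]
  refine le_antisymm (Finset.sup_le fun k _ => ?_) ?_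
  · by_cases hk : (i ≤ u ∧ u < k) ∧ (k ≤ v ∧ v < j)
    · obtain ⟨⟨hiu, huk⟩, hkv, hvj⟩ := hk
      rw [if_pos ⟨hiu, huk⟩, if_pos ⟨hkv, hvj⟩, if_pos ⟨hiu, huk.trans_le hkv, hvj⟩]
      norm_num
    · split_ifs <;> simp_all
  · split_ifs with h
    · refine Finset.le_sup_of_le (Finset.mem_univ v) ?_
      simp only [h, and_self, if_true, le_refl]
      norm_num
    · exact bot_le

lemma stepMat_mul_stepMat_of_le {u v : Fin m} (h : v ≤ u) : stepMat u * stepMat v = ⊥ := by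
  funext i j
  rw [stepMat_mul_stepMat_apply, if_neg fun hc => (h.trans_lt hc.2.1).false]
  rfl

lemma stepMat_mul_stepMat_le_right {u v w : Fin m} (hwv : w < v) (hvu : v ≤ u) :
    stepMat w * stepMat u ≤ stepMat w * stepMat v := fun i j => by
  simp only [stepMat_mul_stepMat_apply]
  split_ifs with h₁ h₂
  · exact le_rfl
  · exact absurd ⟨h₁.1, hwv, hvu.trans_lt h₁.2.2⟩ h₂
  · exact bot_le
  · exact le_rfl

lemma stepMat_mul_stepMat_le_left {u v w : Fin m} (hwv : w ≤ v) (hvu : v < u) :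
    stepMat w * stepMat u ≤ stepMat v * stepMat u := fun i j => by
  simp only [stepMat_mul_stepMat_apply]
  split_ifs with h₁ h₂
  · exact le_rfl
  · exact absurd ⟨h₁.1.trans hwv, hvu, h₁.2.2⟩ h₂
  · exact bot_le
  · exact le_rfl

lemma one_sup_stepMat_mul_self (u : Fin m) :
    (1 ⊔ stepMat u) * (1 ⊔ stepMat u) = 1 ⊔ stepMat u := by
  rw [one_sup_mul_one_sup, stepMat_mul_stepMat_of_le le_rfl, sup_bot_eq, sup_right_idem]

lemma one_sup_stepMat_knuth₁ {u v w : Fin m} (hwv : w < v) (hvu : v ≤ u) :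
    (1 ⊔ stepMat u) * (1 ⊔ stepMat w) * (1 ⊔ stepMat v) =
      (1 ⊔ stepMat w) * (1 ⊔ stepMat u) * (1 ⊔ stepMat v) := by
  rw [one_sup_mul_one_sup_mul_one_sup, one_sup_mul_one_sup_mul_one_sup,
    stepMat_mul_stepMat_of_le (hwv.le.trans hvu), stepMat_mul_stepMat_of_le hvu, bot_mul,
    mul_assoc, stepMat_mul_stepMat_of_le hvu, mul_bot]
  simp only [sup_bot_eq]
  rw [sup_assoc _ (stepMat w * stepMat u), sup_eq_right.2 (stepMat_mul_stepMat_le_right hwv hvu)]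
  ac_rfl

lemma one_sup_stepMat_knuth₂ {u v w : Fin m} (hwv : w ≤ v) (hvu : v < u) :
    (1 ⊔ stepMat v) * (1 ⊔ stepMat u) * (1 ⊔ stepMat w) =
      (1 ⊔ stepMat v) * (1 ⊔ stepMat w) * (1 ⊔ stepMat u) := by
  rw [one_sup_mul_one_sup_mul_one_sup, one_sup_mul_one_sup_mul_one_sup,
    stepMat_mul_stepMat_of_le (hwv.trans hvu.le), stepMat_mul_stepMat_of_le hwv, bot_mul,
    mul_assoc, stepMat_mul_stepMat_of_le (hwv.trans hvu.le), mul_bot]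
  simp only [sup_bot_eq]
  rw [sup_assoc _ (stepMat v * stepMat u), sup_eq_left.2 (stepMat_mul_stepMat_le_left hwv hvu)]
  ac_rfl

end TropMat

open TropMat

lemma bar_strictAnti {n : ℕ} : StrictAnti (bar (n := n)) := fun x y h => by
  simp only [bar, Fin.mk_lt_mk]
  omega

lemma letterMat_eq_one_sup_stepMat {n : ℕ} (x : Fin n) :
    (letterMat x : TropMat (n + 1)) = 1 ⊔ stepMat (bar x) := by
  funext i j
  simp only [letterMat, sup_apply, one_apply, tropId, stepMat]
  split_ifs with hij h
  · exact absurd (h.1.trans_lt h.2) (hij ▸ lt_irrefl j)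
  all_goals simp

lemma rhoList_append {n : ℕ} (u v : List (Fin n)) :
    rhoList (u ++ v) = tmul (rhoList u) (rhoList v) := by
  induction u with
  | nil => exact (tropId_tmul _).symm
  | cons x xs ih => rw [List.cons_append, rhoList, rhoList, ih, tmul_assoc]

def rho (n : ℕ) : FreeMonoid (Fin n) →* TropMat (n + 1) where
  toFun w := rhoList w.toList
  map_one' := rfl
  map_mul' u v := rhoList_append u.toList v.toList

lemma rho_of {n : ℕ} (x : Fin n) : rho n (.of x) = 1 ⊔ stepMat (bar x) :=
  (tmul_tropId (letterMat x)).trans (letterMat_eq_one_sup_stepMat x)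

lemma stylCon_le_ker_rho (n : ℕ) : stylCon n ≤ Con.ker (rho n) := by
  refine Con.conGen_le.2 fun u v huv => ?_
  rw [Con.ker_rel]
  cases huv with
  | knuth₁ a b c hab hbc =>
    simp only [map_mul, rho_of]
    exact one_sup_stepMat_knuth₁ (bar_strictAnti hbc) (bar_strictAnti.antitone hab)
  | knuth₂ a b c hab hbc =>
    simp only [map_mul, rho_of]
    exact one_sup_stepMat_knuth₂ (bar_strictAnti.antitone hbc) (bar_strictAnti hab)
  | idem a =>
    simp only [map_mul, rho_of]
    exact one_sup_stepMat_mul_self _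

theorem rho_induces_hom_general (n : ℕ) :
    (∀ u v : FreeMonoid (Fin n), stylCon n u v →
      rhoList (FreeMonoid.toList u) = rhoList (FreeMonoid.toList v)) ∧
    ∃ f : Styl n → Matrix (Fin (n + 1)) (Fin (n + 1)) Trop,
      (∀ w : FreeMonoid (Fin n), f ((stylCon n).mk' w) = rhoList (FreeMonoid.toList w)) ∧
      f 1 = tropId (n + 1) ∧
      ∀ x y : Styl n, f (x * y) = tmul (f x) (f y) := by
  have hker := stylCon_le_ker_rho n
  let f := (stylCon n).lift (rho n) hker
  exact ⟨fun u v huv => hker huv, f, Con.lift_mk' hker, map_one f, map_mul f⟩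

/-- `ρ_n` respects the stylic congruence, hence induces a well-defined
monoid homomorphism from `styl_n` to `U_{n+1}(𝕋)` (a map on the quotient sending the
identity to the tropical identity matrix and products to tropical matrix products). -/
theorem rho_induces_hom (n : ℕ) (hn : 1 ≤ n) :
    (∀ u v : FreeMonoid (Fin n), stylCon n u v →
      rhoList (FreeMonoid.toList u) = rhoList (FreeMonoid.toList v)) ∧
    ∃ f : Styl n → Matrix (Fin (n + 1)) (Fin (n + 1)) Trop,
      (∀ w : FreeMonoid (Fin n), f ((stylCon n).mk' w) = rhoList (FreeMonoid.toList w)) ∧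
      f 1 = tropId (n + 1) ∧
      ∀ x y : Styl n, f (x * y) = tmul (f x) (f y) :=
  rho_induces_hom_general n
end

section
/- Let n ≥ 1, let w be a word over 𝒜_n, let a ∈ 𝒜_n and write ā = n+1−a, and let k ∈ ℕ with k ≥ 1. Then a ∈ supp(δ^{k−1}(w)) (i.e. a occurs in the k-th row of the N-tableau N(w)) if and only if there exists an index j with ā < j ≤ n+1 such that ρ_n(w)_{ā,j} = k and ρ_n(w)_{ā+1,j} = k−1. -/
/-!
For `i < j`, the entry `ρ_n(w)_{i,j}` is the length of a longest strictly decreasing subsequence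
of `w` whose letters `x` satisfy `i ≤ x̄ < j` (and `-∞` if there is none). A Greene-type argument,
by induction on `w` along the insertion path of its last letter, shows that this length is also the
largest `k` admitting letters `c₀ < ⋯ < c_{k-1}` of the window with `cₗ` in row `l + 1` of `N(w)`.
For these chain lengths `L`, the letter `a` lies in row `K + 1` iff for some `b` the window
`[b, a]` carries a chain of length `K + 1` while `[b, a)` only carries one of length `K`: take for
`b` the largest lower bound leaving room for a chain of length `K + 1` that ends with `a`.
-/

namespace NTableau

variable {n : ℕ}

theorem up_eq_some_iff {B : Finset (Fin n)} {a c : Fin n} :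
    up B a = some c ↔ c ∈ B ∧ a < c ∧ ∀ d ∈ B, a < d → c ≤ d := by
  unfold up
  split_ifs with h
  · simp only [Option.some_inj, Finset.min'_eq_iff, Finset.mem_filter, and_imp, and_assoc]
  · simp only [false_iff, not_and]
    exact fun hc hac _ => h ⟨c, Finset.mem_filter.2 ⟨hc, hac⟩⟩

theorem exists_up_eq_some_le {B : Finset (Fin n)} {a d : Fin n} (hd : d ∈ B) (had : a < d) :
    ∃ c, up B a = some c ∧ c ≤ d := by
  unfold up
  rw [dif_pos ⟨d, Finset.mem_filter.2 ⟨hd, had⟩⟩]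
  exact ⟨_, rfl, Finset.min'_le _ _ (Finset.mem_filter.2 ⟨hd, had⟩)⟩

theorem mem_delta {w : List (Fin n)} {z : Fin n} :
    z ∈ delta w ↔ ∃ i, ∃ h : i < w.length, up (w.take i).toFinset w[i] = some z := by
  simp only [delta, List.mem_filterMap, List.mem_range]
  refine exists_congr fun i => ⟨fun ⟨hi, hz⟩ => ⟨hi, ?_⟩, fun ⟨hi, hz⟩ => ⟨hi, ?_⟩⟩ <;>
    simpa [List.getElem?_eq_getElem hi] using hz

theorem delta_append_singleton (w : List (Fin n)) (x : Fin n) :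
    delta (w ++ [x]) = delta w ++ (up w.toFinset x).toList := by
  unfold delta
  rw [List.length_append, List.length_singleton, List.range_succ, List.filterMap_append]
  congr 1
  · refine List.filterMap_congr fun i hi => ?_
    rw [List.mem_range] at hi
    rw [List.getElem?_append_left hi, List.take_append_of_le_length hi.le]
  · cases h : up w.toFinset x <;> simp [h]

/-- The rows of the N-tableau, indexed from `0`: `row w k` is the `(k+1)`-th row. -/
def row (w : List (Fin n)) (k : ℕ) : Finset (Fin n) := (delta^[k] w).toFinset

theorem row_nil (k : ℕ) : row ([] : List (Fin n)) k = ∅ := by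
  simp [row, Function.iterate_fixed (show delta ([] : List (Fin n)) = [] by simp [delta])]

theorem row_succ_subset (w : List (Fin n)) (k : ℕ) : row w (k + 1) ⊆ row w k := by
  intro z hz
  simp only [row, Function.iterate_succ_apply', List.mem_toFinset, mem_delta] at hz ⊢
  obtain ⟨i, hi, hz⟩ := hz
  exact List.take_subset i _ (List.mem_toFinset.1 (up_eq_some_iff.1 hz).1)

theorem exists_lt_of_mem_row_succ {w : List (Fin n)} {k : ℕ} {z : Fin n}
    (hz : z ∈ row w (k + 1)) : ∃ d ∈ row w k, d < z := by
  simp only [row, Function.iterate_succ_apply', List.mem_toFinset, mem_delta] at hz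
  obtain ⟨i, hi, hz⟩ := hz
  exact ⟨_, List.mem_toFinset.2 (List.getElem_mem hi), (up_eq_some_iff.1 hz).2.1⟩

section InsertPath

variable (R : ℕ → Finset (Fin n)) (x : Fin n)

def insertPath : ℕ → Option (Fin n)
  | 0 => some x
  | k + 1 => (insertPath k).bind (up (R k))

def insertRows (k : ℕ) : Finset (Fin n) := R k ∪ (insertPath R x k).toFinset

variable {R x}

theorem insertPath_succ_eq_some {k : ℕ} {c : Fin n} :
    insertPath R x (k + 1) = some c ↔ ∃ c', insertPath R x k = some c' ∧ up (R k) c' = some c :=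
  Option.bind_eq_some_iff

theorem mem_of_insertPath_succ_eq_some {k : ℕ} {c : Fin n}
    (h : insertPath R x (k + 1) = some c) : c ∈ R k := by
  obtain ⟨c', -, hc⟩ := insertPath_succ_eq_some.1 h
  exact (up_eq_some_iff.1 hc).1

theorem insertPath_lt_succ {k : ℕ} {c d : Fin n} (hc : insertPath R x k = some c)
    (hd : insertPath R x (k + 1) = some d) : c < d := by
  obtain ⟨c', hc', hd⟩ := insertPath_succ_eq_some.1 hd
  cases hc.symm.trans hc'
  exact (up_eq_some_iff.1 hd).2.1

theorem exists_insertPath_succ_le {k : ℕ} {c d : Fin n} (hc : insertPath R x k = some c)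
    (hd : d ∈ R k) (hcd : c < d) : ∃ c', insertPath R x (k + 1) = some c' ∧ c' ≤ d := by
  obtain ⟨c', hc', hc'd⟩ := exists_up_eq_some_le hd hcd
  exact ⟨c', insertPath_succ_eq_some.2 ⟨c, hc, hc'⟩, hc'd⟩

theorem exists_insertPath_le_of_le {i j : ℕ} {d : Fin n} (hij : i ≤ j)
    (hd : insertPath R x j = some d) : ∃ c, insertPath R x i = some c ∧ c ≤ d := by
  induction j, hij using Nat.le_induction generalizing d with
  | base => exact ⟨d, hd, le_rfl⟩
  | succ j _ ih =>
    obtain ⟨c', hc', hd'⟩ := insertPath_succ_eq_some.1 hd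
    obtain ⟨c, hc, hcc'⟩ := ih hc'
    have hc'd := insertPath_lt_succ hc' (insertPath_succ_eq_some.2 ⟨c', hc', hd'⟩)
    exact ⟨c, hc, hcc'.trans hc'd.le⟩

theorem le_of_insertPath_eq_some {k : ℕ} {c : Fin n} (h : insertPath R x k = some c) : x ≤ c := by
  obtain ⟨_, hx, hxc⟩ := exists_insertPath_le_of_le (Nat.zero_le k) h
  exact Option.some_inj.1 hx ▸ hxc

theorem insertRows_succ_subset (hR : ∀ k, R (k + 1) ⊆ R k) (k : ℕ) :
    insertRows R x (k + 1) ⊆ R k := by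
  intro c hc
  rcases Finset.mem_union.1 hc with hc | hc
  · exact hR k hc
  · exact mem_of_insertPath_succ_eq_some (Option.mem_toFinset.1 hc)

end InsertPath

theorem iterate_delta_append_singleton (w : List (Fin n)) (x : Fin n) (k : ℕ) :
    delta^[k] (w ++ [x]) = delta^[k] w ++ (insertPath (row w) x k).toList := by
  induction k with
  | zero => rfl
  | succ k ih =>
    rw [Function.iterate_succ_apply', Function.iterate_succ_apply', ih]
    cases h : insertPath (row w) x k with
    | none => simp [insertPath, h]
    | some c => simp [delta_append_singleton, insertPath, h, row]

theorem row_append_singleton (w : List (Fin n)) (x : Fin n) :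
    row (w ++ [x]) = insertRows (row w) x := by
  ext k c
  simp [row, insertRows, iterate_delta_append_singleton, Option.mem_toFinset]

section RowChain

variable {R : ℕ → Finset (Fin n)} {b u k : ℕ}

structure IsRowChain (R : ℕ → Finset (Fin n)) (b u : ℕ) {k : ℕ} (m : Fin k → Fin n) : Prop where
  strictMono : StrictMono m
  mem : ∀ i : Fin k, m i ∈ R i
  le : ∀ i, b ≤ (m i).val
  lt : ∀ i, (m i).val < u

def HasRowChain (R : ℕ → Finset (Fin n)) (b u k : ℕ) : Prop :=
  ∃ m : Fin k → Fin n, IsRowChain R b u m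

theorem IsRowChain.mono {m : Fin k → Fin n} (hm : IsRowChain R b u m) {R' : ℕ → Finset (Fin n)}
    {b' u' : ℕ} (hR : ∀ i, R i ⊆ R' i) (hb : b' ≤ b) (hu : u ≤ u') : IsRowChain R' b' u' m :=
  ⟨hm.strictMono, fun i => hR i (hm.mem i), fun i => hb.trans (hm.le i),
    fun i => (hm.lt i).trans_le hu⟩

theorem IsRowChain.lt_last_succ {m : Fin (k + 1) → Fin n} (hm : IsRowChain R b u m) (i) :
    (m i).val < (m (Fin.last k)).val + 1 :=
  Nat.lt_succ_of_le (hm.strictMono.monotone (Fin.le_last i))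

theorem IsRowChain.init {m : Fin (k + 1) → Fin n} (hm : IsRowChain R b u m) :
    IsRowChain R b (m (Fin.last k)) (Fin.init m) :=
  ⟨hm.strictMono.comp Fin.strictMono_castSucc, fun _ => hm.mem _, fun _ => hm.le _,
    fun i => hm.strictMono (Fin.castSucc_lt_last i)⟩

theorem IsRowChain.tail (hR : ∀ i, R (i + 1) ⊆ R i) {m : Fin (k + 1) → Fin n}
    (hm : IsRowChain R b u m) : IsRowChain R ((m 0).val + 1) u (Fin.tail m) :=
  ⟨hm.strictMono.comp (Fin.strictMono_succ), fun i => hR i (hm.mem i.succ),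
    fun i => hm.strictMono (Fin.succ_pos i), fun _ => hm.lt _⟩

theorem IsRowChain.snoc {m : Fin k → Fin n} (hm : IsRowChain R b u m) {a : Fin n} (ha : a ∈ R k)
    (hma : ∀ i, m i < a) (hb : b ≤ a.val) (hu : a.val < u) :
    IsRowChain R b u (Fin.snoc m a : Fin (k + 1) → Fin n) := by
  refine ⟨fun i j hij => ?_, Fin.lastCases ?_ ?_, Fin.lastCases ?_ ?_, Fin.lastCases ?_ ?_⟩ <;>
    try simp only [Fin.snoc_castSucc, Fin.snoc_last, Fin.val_last, Fin.val_castSucc, ha, hb,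
      hu, hm.mem, hm.le, hm.lt, implies_true]
  induction j using Fin.lastCases with
  | last =>
    induction i using Fin.lastCases with
    | last => exact absurd hij (lt_irrefl _)
    | cast i => simpa only [Fin.snoc_castSucc, Fin.snoc_last] using hma i
  | cast j =>
    induction i using Fin.lastCases with
    | last => exact absurd hij (Fin.castSucc_lt_last j).asymm
    | cast i =>
      simpa only [Fin.snoc_castSucc] using hm.strictMono (Fin.castSucc_lt_castSucc_iff.1 hij)

theorem HasRowChain.of_le {k' : ℕ} (h : HasRowChain R b u k) (hk : k' ≤ k) :
    HasRowChain R b u k' :=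
  match h with
  | ⟨m, hm⟩ => ⟨m ∘ Fin.castLE hk, hm.strictMono.comp (Fin.strictMono_castLE hk),
      fun _ => hm.mem _, fun _ => hm.le _, fun _ => hm.lt _⟩

theorem hasRowChain_of_mem (hdown : ∀ k, ∀ z ∈ R (k + 1), ∃ d ∈ R k, d < z) {a : Fin n}
    {K : ℕ} (ha : a ∈ R K) : HasRowChain R 0 (a.val + 1) (K + 1) := by
  induction K generalizing a with
  | zero =>
    refine ⟨fun _ => a, Subsingleton.strictMono (α := Fin 1) _, fun i => ?_,
      fun _ => Nat.zero_le _, fun _ => Nat.lt_succ_self _⟩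
    rwa [Fin.fin_one_eq_zero i]
  | succ K ih =>
    obtain ⟨d, hd, hda⟩ := hdown K a ha
    obtain ⟨m, hm⟩ := ih hd
    exact ⟨_, (hm.mono (fun _ => subset_rfl) le_rfl (Nat.succ_le_succ hda.le)).snoc ha
      (fun i => (hm.lt i).trans_le hda) (Nat.zero_le _) (Nat.lt_succ_self _)⟩

theorem mem_iff_exists_maxChainLength (hR : ∀ k, R (k + 1) ⊆ R k)
    (hdown : ∀ k, ∀ z ∈ R (k + 1), ∃ d ∈ R k, d < z) {L : ℕ → ℕ → ℕ}
    (hL : ∀ b u k, HasRowChain R b u k ↔ k ≤ L b u) (a : Fin n) (K : ℕ) :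
    a ∈ R K ↔ ∃ b, L b (a.val + 1) = K + 1 ∧ L b a.val = K := by
  constructor
  · intro ha
    classical
    set B := Nat.findGreatest (fun b => HasRowChain R b (a.val + 1) (K + 1)) a.val
    obtain ⟨m, hm⟩ : HasRowChain R B (a.val + 1) (K + 1) :=
      Nat.findGreatest_spec (P := fun b => HasRowChain R b (a.val + 1) (K + 1)) (Nat.zero_le _)
        (hasRowChain_of_mem hdown ha)
    have hmax : ∀ b, B < b → b ≤ a.val → ¬HasRowChain R b (a.val + 1) (K + 1) :=
      fun _ => Nat.findGreatest_is_greatest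
    refine ⟨B, le_antisymm ?_ ((hL _ _ _).1 ⟨m, hm⟩), le_antisymm ?_ ((hL _ _ _).1
      ⟨_, hm.init.mono (fun _ => subset_rfl) le_rfl (Nat.lt_succ_iff.1 (hm.lt _))⟩)⟩
    · by_contra! hlong
      obtain ⟨q, hq⟩ := (hL B (a.val + 1) (K + 2)).2 hlong
      have h0 : q 0 < q (Fin.last (K + 1)) := hq.strictMono (Fin.last_pos)
      have := hq.lt (Fin.last (K + 1))
      exact hmax _ (Nat.lt_succ_of_le (hq.le 0)) (by omega) ⟨_, hq.tail hR⟩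
    · by_contra! hlong
      obtain ⟨r, hr⟩ := (hL B a.val (K + 1)).2 hlong
      exact hmax _ (Nat.lt_succ_of_le (hr.le 0)) (hr.lt 0)
        ⟨_, ((hr.tail hR).mono (fun _ => subset_rfl) le_rfl (Nat.le_succ _)).snoc ha
          (fun i => hr.lt i.succ) (hr.lt 0) (Nat.lt_succ_self _)⟩
  · rintro ⟨b, hlen, hlen'⟩
    obtain ⟨m, hm⟩ := (hL b (a.val + 1) (K + 1)).2 hlen.ge
    suffices m (Fin.last K) = a from this ▸ hm.mem _
    by_contra hne
    have hlast : (m (Fin.last K)).val < a.val := by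
      have := hm.lt (Fin.last K)
      have := Fin.val_ne_of_ne hne
      omega
    have := (hL b a.val (K + 1)).1
      ⟨m, hm.strictMono, hm.mem, hm.le, fun i => (hm.lt_last_succ i).trans_le hlast⟩
    omega

end RowChain

section InsertRows

variable {R : ℕ → Finset (Fin n)} {x : Fin n} {b u : ℕ}

theorem insertPath_lt_of_lt {i j : ℕ} {c d : Fin n} (hij : i < j) (hc : insertPath R x i = some c)
    (hd : insertPath R x j = some d) : c < d := by
  obtain ⟨c', hc', hc'd⟩ := exists_insertPath_le_of_le hij hd
  exact (insertPath_lt_succ hc hc').trans_le hc'd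

theorem hasRowChain_insertRows_of_hasRowChain_above (hb : b ≤ x.val) (hu : x.val < u) {t : ℕ}
    (h : HasRowChain R (x.val + 1) u t) : HasRowChain (insertRows R x) b u (t + 1) := by
  obtain ⟨m, hm⟩ := h
  have key : ∀ i ≤ t, ∃ c, insertPath R x i = some c ∧ c.val < u ∧
      ∀ j : Fin t, i ≤ j → c < m j := by
    intro i hi
    induction i with
    | zero => exact ⟨x, rfl, hu, fun j _ => hm.le j⟩
    | succ i ih =>
      obtain ⟨c, hc, -, hcm⟩ := ih (by omega)
      obtain ⟨c', hc', hc'm⟩ := exists_insertPath_succ_le hc (hm.mem ⟨i, hi⟩) (hcm _ le_rfl)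
      exact ⟨c', hc', (Fin.le_def.1 hc'm).trans_lt (hm.lt _), fun j hj =>
        hc'm.trans_lt (hm.strictMono (Fin.lt_def.2 (Nat.lt_of_succ_le hj)))⟩
  choose c hc hcu using fun i : Fin (t + 1) => key i (Nat.lt_succ_iff.1 i.2)
  exact ⟨c, Fin.strictMono_iff_lt_succ.2 fun i => insertPath_lt_succ (hc i.castSucc) (hc i.succ),
    fun i => Finset.mem_union_right _ (Option.mem_toFinset.2 (hc i)),
    fun i => hb.trans (le_of_insertPath_eq_some (hc i)), fun i => (hcu i).1⟩

theorem exists_insertPath_ge_of_strictMono {k : ℕ} {m : Fin k → Fin n} (hm : StrictMono m)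
    {j : Fin k} (hmem : ∀ i < j, m i ∈ R i) (hj : insertPath R x j = some (m j)) :
    ∀ i ≤ j, ∃ c, insertPath R x i = some c ∧ m i ≤ c := by
  intro i hi
  obtain ⟨d, hd⟩ : ∃ d, j.val = i.val + d := ⟨j - i, by omega⟩
  induction d generalizing i with
  | zero =>
    obtain rfl : i = j := Fin.ext (by omega)
    exact ⟨m i, hj, le_rfl⟩
  | succ d ih =>
    have hik : i.val + 1 < k := by omega
    obtain ⟨c', hc', hmc'⟩ := ih ⟨i + 1, hik⟩ (Fin.le_def.2 (show i.val + 1 ≤ j.val by omega))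
      (show j.val = i.val + 1 + d by omega)
    obtain ⟨c, hc, -⟩ := insertPath_succ_eq_some.1 hc'
    refine ⟨c, hc, le_of_not_gt fun hlt => ?_⟩
    obtain ⟨c'', hc'', hc''m⟩ :=
      exists_insertPath_succ_le hc (hmem i (Fin.lt_def.2 (by omega))) hlt
    cases hc''.symm.trans hc'
    exact absurd (hmc'.trans hc''m) (not_le.2 (hm (Fin.lt_def.2 (Nat.lt_succ_self _))))

theorem hasRowChain_above_of_isRowChain_insertRows (hR : ∀ k, R (k + 1) ⊆ R k) {k : ℕ}
    {m : Fin (k + 1) → Fin n} (hm : IsRowChain (insertRows R x) b u m) {j : Fin (k + 1)}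
    (hmem : ∀ i < j, m i ∈ R i) (hj : insertPath R x j = some (m j)) :
    b ≤ x.val ∧ x.val < u ∧ HasRowChain R (x.val + 1) u k := by
  have hdom := exists_insertPath_ge_of_strictMono hm.strictMono hmem hj
  obtain ⟨c, hc, hmc⟩ := hdom 0 (Fin.zero_le _)
  cases hc
  have hxj : x ≤ m j := le_of_insertPath_eq_some hj
  refine ⟨(hm.le 0).trans hmc, (Fin.le_def.1 hxj).trans_lt (hm.lt j), ?_⟩
  set p : ℕ → Fin n := fun i => (insertPath R x i).getD x
  have hp : ∀ i ≤ j.val, insertPath R x i = some (p i) ∧ p i ≤ m j := fun i hi => by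
    obtain ⟨c, hc, hcj⟩ := exists_insertPath_le_of_le hi hj
    simpa only [p, hc, Option.getD_some, true_and] using hcj
  -- follow the insertion path up to row `j`, then the chain itself, one row lower
  refine ⟨fun i => if i.val < j.val then p (i + 1) else m i.succ, fun i i' hii' => ?_,
    fun i => ?_, fun i => ?_, fun i => ?_⟩
  · split_ifs with h h' h'
    · exact insertPath_lt_of_lt (Nat.succ_lt_succ hii') (hp _ h).1 (hp _ h').1
    · exact (hp _ h).2.trans_lt (hm.strictMono (Fin.lt_def.2 (by rw [Fin.val_succ]; omega)))
    · exact absurd ((Fin.lt_def.1 hii').trans h') h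
    · exact hm.strictMono (Fin.succ_lt_succ_iff.2 hii')
  · split_ifs with h
    · exact mem_of_insertPath_succ_eq_some (hp _ h).1
    · exact insertRows_succ_subset hR _ (hm.mem i.succ)
  · split_ifs with h
    · exact insertPath_lt_of_lt (Nat.succ_pos _) rfl (hp _ h).1
    · exact hxj.trans_lt (hm.strictMono (Fin.lt_def.2 (by rw [Fin.val_succ]; omega)))
  · split_ifs with h
    · exact (Fin.le_def.1 (hp _ h).2).trans_lt (hm.lt j)
    · exact hm.lt _

theorem hasRowChain_insertRows_iff (hR : ∀ k, R (k + 1) ⊆ R k) {k : ℕ} :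
    HasRowChain (insertRows R x) b u k ↔
      HasRowChain R b u k ∨ (b ≤ x.val ∧ x.val < u ∧ HasRowChain R (x.val + 1) u (k - 1)) := by
  constructor
  · rintro ⟨m, hm⟩
    by_cases hold : ∀ i : Fin k, m i ∈ R i
    · exact Or.inl ⟨m, hm.strictMono, hold, hm.le, hm.lt⟩
    obtain ⟨j, hj, hmin⟩ := wellFounded_lt.has_min {i : Fin k | m i ∉ R i} (not_forall.1 hold)
    obtain ⟨k, rfl⟩ : ∃ k', k = k' + 1 := Nat.exists_eq_add_one_of_ne_zero (by have := j.2; omega)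
    have hnew : insertPath R x j = some (m j) := by
      have := hm.mem j
      simp only [insertRows, Finset.mem_union, Option.mem_toFinset] at this
      exact this.resolve_left hj
    exact Or.inr (hasRowChain_above_of_isRowChain_insertRows hR hm
      (fun i hi => not_not.1 fun h => hmin i h hi) hnew)
  · rintro (⟨m, hm⟩ | ⟨hb, hu, h⟩)
    · exact ⟨m, hm.mono (fun _ => Finset.subset_union_left) le_rfl le_rfl⟩
    · exact (hasRowChain_insertRows_of_hasRowChain_above hb hu h).of_le (by omega)

end InsertRows

/-- The length of a longest strictly decreasing subsequence of `w` with all letters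
in `[b, u)`. -/
def decrLen : List (Fin n) → ℕ → ℕ → ℕ
  | [], _, _ => 0
  | x :: xs, b, u =>
    if b ≤ x.val ∧ x.val < u then max (decrLen xs b u) (decrLen xs b x.val + 1)
    else decrLen xs b u

theorem decrLen_eq_zero_of_le {w : List (Fin n)} {b u : ℕ} (h : u ≤ b) : decrLen w b u = 0 := by
  induction w with
  | nil => rfl
  | cons x xs ih => rw [decrLen, if_neg (by omega), ih]

theorem decrLen_mono_right {w : List (Fin n)} {b u u' : ℕ} (h : u ≤ u') :
    decrLen w b u ≤ decrLen w b u' := by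
  induction w with
  | nil => exact le_rfl
  | cons x xs ih =>
    simp only [decrLen]
    split_ifs <;> omega

theorem decrLen_le_cons (x : Fin n) (w : List (Fin n)) (b u : ℕ) :
    decrLen w b u ≤ decrLen (x :: w) b u := by
  simp only [decrLen]
  split_ifs <;> omega

theorem decrLen_append_singleton (w : List (Fin n)) (x : Fin n) (b u : ℕ) :
    decrLen (w ++ [x]) b u =
      if b ≤ x.val ∧ x.val < u then max (decrLen w b u) (decrLen w (x.val + 1) u + 1)
      else decrLen w b u := by
  induction w generalizing b u with
  | nil => simp [decrLen]
  | cons y ys ih =>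
    simp only [List.cons_append, decrLen, ih]
    split_ifs <;> omega

theorem decrLen_self_succ (w : List (Fin n)) (a : Fin n) :
    decrLen w a.val (a.val + 1) = if a ∈ w then 1 else 0 := by
  induction w with
  | nil => rfl
  | cons x xs ih =>
    rw [decrLen, ih]
    by_cases hx : x = a
    · subst hx
      simp only [decrLen_eq_zero_of_le (le_refl _), List.mem_cons_self, if_true]
      split_ifs <;> omega
    · have : x.val ≠ a.val := Fin.val_ne_of_ne hx
      rw [if_neg (by omega)]
      simp [List.mem_cons, Ne.symm hx]

theorem hasRowChain_row_iff (w : List (Fin n)) (b u k : ℕ) :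
    HasRowChain (row w) b u k ↔ k ≤ decrLen w b u := by
  induction w using List.reverseRecOn generalizing b u k with
  | nil =>
    rw [decrLen, Nat.le_zero]
    constructor
    · rintro ⟨m, hm⟩
      by_contra hk
      simpa [row_nil] using hm.mem ⟨0, Nat.pos_of_ne_zero hk⟩
    · rintro rfl
      exact ⟨Fin.elim0, fun i => i.elim0, fun i => i.elim0, fun i => i.elim0, fun i => i.elim0⟩
  | append_singleton w x ih =>
    rw [row_append_singleton, hasRowChain_insertRows_iff (row_succ_subset w), ih, ih,
      decrLen_append_singleton]
    split_ifs <;> omega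

theorem mem_row_iff_decrLen (w : List (Fin n)) (a : Fin n) (K : ℕ) :
    a ∈ row w K ↔ ∃ b, decrLen w b (a.val + 1) = K + 1 ∧ decrLen w b a.val = K :=
  mem_iff_exists_maxChainLength (row_succ_subset w) (fun _ _ => exists_lt_of_mem_row_succ)
    (hasRowChain_row_iff w) a K

/-- The letters `x` with `n - j ≤ x < n - i` are those with `i ≤ x̄ < j`. -/
noncomputable def decrMat (w : List (Fin n)) : Matrix (Fin (n + 1)) (Fin (n + 1)) Trop :=
  fun i j => if i = j then 0 else if i < j ∧ 0 < decrLen w (n - j) (n - i) then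
    ((decrLen w (n - j) (n - i) : ℝ) : Trop) else ⊥

theorem decrMat_le_natCast (w : List (Fin n)) (i j : Fin (n + 1)) :
    decrMat w i j ≤ ((decrLen w (n - j) (n - i) : ℝ) : Trop) := by
  unfold decrMat
  split_ifs
  · exact WithBot.coe_le_coe.2 (Nat.cast_nonneg _)
  · exact le_rfl
  · exact bot_le

theorem natCast_le_decrMat {w : List (Fin n)} {i j : Fin (n + 1)} (hij : i < j) {q : ℕ}
    (hq : 0 < q) (hqw : q ≤ decrLen w (n - j) (n - i)) : ((q : ℝ) : Trop) ≤ decrMat w i j := by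
  rw [decrMat, if_neg hij.ne, if_pos ⟨hij, hq.trans_le hqw⟩]
  exact_mod_cast hqw

theorem decrMat_of_lt {w : List (Fin n)} {i j : Fin (n + 1)} (hji : j < i) : decrMat w i j = ⊥ := by
  rw [decrMat, if_neg hji.ne', if_neg fun h => h.1.asymm hji]

theorem decrMat_le_cons (x : Fin n) (w : List (Fin n)) (i j : Fin (n + 1)) :
    decrMat w i j ≤ decrMat (x :: w) i j := by
  have hle := decrLen_le_cons x w (n - j) (n - i)
  unfold decrMat
  split_ifs with _ h h'
  · exact le_rfl
  · exact_mod_cast hle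
  · exact absurd ⟨h.1, h.2.trans_le hle⟩ h'
  all_goals exact bot_le

theorem decrMat_eq_natCast_iff {w : List (Fin n)} {i j : Fin (n + 1)} {q : ℕ} :
    decrMat w i j = ((q : ℝ) : Trop) ↔
      (i = j ∧ q = 0) ∨ (i < j ∧ 0 < q ∧ decrLen w (n - j) (n - i) = q) := by
  unfold decrMat
  split_ifs with h h'
  · simp [h, eq_comm]
  · simp only [WithBot.coe_inj, Nat.cast_inj, h, h'.1, false_and, true_and, false_or]
    omega
  · simp only [WithBot.bot_ne_coe, h, false_and, false_or, false_iff]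
    omega

theorem one_add_natCast (q : ℕ) : (1 : Trop) + ((q : ℝ) : Trop) = (((q + 1 : ℕ) : ℝ) : Trop) := by
  push_cast
  rw [add_comm]

theorem letterMat_add_decrMat_le (x : Fin n) (w : List (Fin n)) (i t j : Fin (n + 1)) :
    letterMat x i t + decrMat w t j ≤ decrMat (x :: w) i j := by
  have hbar : (bar x).val = n - 1 - x.val := rfl
  unfold letterMat
  split_ifs with hit hstep
  · rw [hit, zero_add]
    exact decrMat_le_cons x w t j
  · rcases le_or_gt t j with htj | hjt
    · have hi : i.val ≤ n - 1 - x.val := hstep.1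
      have ht : n - 1 - x.val < t.val := hstep.2
      have htj : t.val ≤ j.val := htj
      have hmono := decrLen_mono_right (w := w) (b := n - j) (show n - t ≤ x.val by omega)
      calc (1 : Trop) + decrMat w t j ≤ 1 + ((decrLen w (n - j) (n - t) : ℝ) : Trop) :=
            add_le_add_right (decrMat_le_natCast w t j) _
        _ = (((decrLen w (n - j) (n - t) + 1 : ℕ) : ℝ) : Trop) := one_add_natCast _
        _ ≤ decrMat (x :: w) i j := by
          refine natCast_le_decrMat (Fin.lt_def.2 (by omega)) (Nat.succ_pos _) ?_
          rw [decrLen, if_pos (by omega)]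
          omega
    · rw [decrMat_of_lt hjt, WithBot.add_bot]
      exact bot_le
  · rw [WithBot.bot_add]
    exact bot_le

theorem decrMat_cons_le_tmul (x : Fin n) (w : List (Fin n)) (i j : Fin (n + 1)) :
    decrMat (x :: w) i j ≤ tmul (letterMat x) (decrMat w) i j := by
  have hbar : (bar x).val = n - 1 - x.val := rfl
  by_cases hij : i = j
  · subst hij
    exact Finset.le_sup_of_le (Finset.mem_univ i) (by simp [letterMat, decrMat])
  by_cases hpos : i < j ∧ 0 < decrLen (x :: w) (n - j) (n - i)
  swap
  · rw [decrMat, if_neg hij, if_neg hpos]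
    exact bot_le
  obtain ⟨hlt, hD⟩ := hpos
  have hlt' : i.val < j.val := hlt
  rw [decrMat, if_neg hij, if_pos ⟨hlt, hD⟩]
  by_cases hold : decrLen (x :: w) (n - j) (n - i) = decrLen w (n - j) (n - i)
  · refine Finset.le_sup_of_le (Finset.mem_univ i) ?_
    rw [letterMat, if_pos rfl, zero_add, hold]
    exact natCast_le_decrMat hlt (hold ▸ hD) le_rfl
  -- otherwise a longest subsequence starts with `x`
  have hcond : n - j ≤ x.val ∧ x.val < n - i := by
    by_contra h
    rw [decrLen, if_neg h] at hold
    exact hold rfl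
  have hnew : decrLen (x :: w) (n - j) (n - i) = decrLen w (n - j) x.val + 1 := by
    rw [decrLen, if_pos hcond] at hold ⊢
    omega
  rw [hnew, ← one_add_natCast]
  rcases Nat.eq_zero_or_pos (decrLen w (n - j) x.val) with hzero | hrest
  · refine Finset.le_sup_of_le (Finset.mem_univ j) ?_
    rw [letterMat, if_neg hij, if_pos ⟨Fin.le_def.2 (by omega), Fin.lt_def.2 (by omega)⟩, hzero]
    simp [decrMat]
  · have hxj : n - j < x.val := by
      by_contra h
      rw [decrLen_eq_zero_of_le (by omega)] at hrest
      exact lt_irrefl 0 hrest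
    let t : Fin (n + 1) := ⟨n - x.val, by omega⟩
    refine Finset.le_sup_of_le (Finset.mem_univ t) ?_
    rw [letterMat, if_neg (Fin.ne_of_val_ne (show i.val ≠ n - x.val by omega)),
      if_pos ⟨Fin.le_def.2 (by omega), Fin.lt_def.2 (show n - 1 - x.val < n - x.val by omega)⟩]
    refine add_le_add_right (natCast_le_decrMat (i := t) (Fin.lt_def.2 (by simp only [t]; omega))
      hrest (le_of_eq ?_)) _
    congr 1
    show x.val = n - (n - x.val)
    omega

theorem rhoList_eq_decrMat (w : List (Fin n)) : rhoList w = decrMat w := by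
  induction w with
  | nil =>
    ext i j
    simp only [rhoList, tropId, decrMat, decrLen, lt_self_iff_false, and_false, if_false]
  | cons x xs ih =>
    ext i j
    rw [rhoList, ih]
    exact le_antisymm (Finset.sup_le fun t _ => letterMat_add_decrMat_le x xs i t j)
      (decrMat_cons_le_tmul x xs i j)

end NTableau

/-- A letter `a` occurs in the `k`-th row of `N(w)` iff there is a column index
`j > ā` such that `ρ_n(w)_{ā,j} = k` and `ρ_n(w)_{ā+1,j} = k - 1`. -/
theorem mem_row_iff_rho
    (n : ℕ) (w : List (Fin n)) (a : Fin n) (k : ℕ) (hk : 1 ≤ k) :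
    a ∈ (delta^[k - 1] w).toFinset ↔
      ∃ j : Fin (n + 1), bar a < j ∧
        rhoList w (bar a) j = ((k : ℝ) : Trop) ∧
        rhoList w ⟨n - a.val, by omega⟩ j = (((k - 1 : ℕ) : ℝ) : Trop) := by
  obtain ⟨k, rfl⟩ : ∃ k', k = k' + 1 := ⟨k - 1, by omega⟩
  have hbar : (bar a).val = n - 1 - a.val := rfl
  have ha : a.val < n := a.2
  simp only [Nat.add_sub_cancel, NTableau.rhoList_eq_decrMat, NTableau.decrMat_eq_natCast_iff,
    Fin.ext_iff, Fin.lt_def, Fin.exists_iff, Nat.add_one_ne_zero, and_false, false_or,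
    Nat.zero_lt_succ, true_and, show n - (bar a).val = a.val + 1 by omega,
    show n - (n - a.val) = a.val by omega]
  change a ∈ NTableau.row w k ↔ _
  constructor
  · intro hmem
    obtain ⟨b, hlen, hlen'⟩ := (NTableau.mem_row_iff_decrLen w a k).1 hmem
    rcases Nat.eq_zero_or_pos k with rfl | hkpos
    · -- for the first row take `j = ā + 1`, where `ρ_{ā+1, j} = 0`
      have hself : NTableau.decrLen w a.val (a.val + 1) = 1 := by
        rw [NTableau.decrLen_self_succ, if_pos (by simpa [NTableau.row] using hmem)]
      exact ⟨n - a.val, by omega, by omega, ⟨by omega, by rwa [Nat.sub_sub_self ha.le]⟩,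
        Or.inl ⟨rfl, rfl⟩⟩
    · have hb : b < a.val := by
        by_contra! h
        rw [NTableau.decrLen_eq_zero_of_le h] at hlen'
        omega
      exact ⟨n - b, by omega, by omega, ⟨by omega, by rwa [Nat.sub_sub_self (by omega)]⟩,
        Or.inr ⟨by omega, hkpos, by rwa [Nat.sub_sub_self (by omega)]⟩⟩
  · rintro ⟨j, -, -, ⟨-, h1⟩, h2⟩
    refine (NTableau.mem_row_iff_decrLen w a k).2 ⟨n - j, h1, ?_⟩
    rcases h2 with ⟨h2, rfl⟩ | ⟨-, -, h2⟩
    · exact NTableau.decrLen_eq_zero_of_le (by omega)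
    · exact h2
end

section
/- Let n ≥ 1 and let Σ be an alphabet of variables. If the stylic monoid styl_n satisfies a monoid identity u ≈ v (with u, v ∈ Σ^*), then u and v have exactly the same subsequences of length at most n. Equivalently, if there is a word of length at most n that is a subsequence of one of u, v but not of the other, then there exists a monoid homomorphism φ : Σ^* → styl_n with φ(u) ≠ φ(v). -/
/-!
The stylic congruence preserves, for every order-convex set `S` of letters and every `m`, whether a
word has a strictly decreasing subsequence of length `m` with letters in `S` (the entries of the
tropical representation `ρ_n` are the maximal such lengths for intervals `S`). In a Knuth relation
the only decreasing subsequence that occurs on one side only is `c a`, and it can be traded for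
`c b` or `b a`, whose letters stay in a convex `S` because `a ≤ b ≤ c`. These invariants form a
congruence, since a decreasing subsequence of `w₁ w₂` splits at a threshold into one of `w₁` and
one of `w₂`.

To separate `u` and `v` by a word `t = x₁ ⋯ x_k` with `k ≤ n`, code the position `i` of `t` by the
letter `n + 1 - i` and substitute for each variable the increasing word of the codes of its
positions in `t`. A decreasing subsequence of the image of a word `w` takes at most one letter from
the image of each variable, so the image of `w` has a decreasing subsequence of length `k` exactly
when `t` is a subsequence of `w`.
-/

open Set
open scoped List

section DecreasingSublist

variable {α : Type*} [LinearOrder α]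

def HasDecreasingSublist (S : Set α) (m : ℕ) (w : List α) : Prop :=
  ∃ d, d <+ w ∧ d.Pairwise (· > ·) ∧ (∀ x ∈ d, x ∈ S) ∧ d.length = m

theorem hasDecreasingSublist_zero (S : Set α) (w : List α) : HasDecreasingSublist S 0 w :=
  ⟨[], List.nil_sublist w, List.Pairwise.nil, by simp, rfl⟩

theorem hasDecreasingSublist_nil_iff {S : Set α} {m : ℕ} :
    HasDecreasingSublist S m [] ↔ m = 0 := by
  refine ⟨?_, ?_⟩
  · rintro ⟨d, hd, -, -, rfl⟩
    simp [List.sublist_nil.1 hd]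
  · rintro rfl
    exact hasDecreasingSublist_zero S []

theorem HasDecreasingSublist.of_sublist {S : Set α} {m : ℕ} {w w' : List α}
    (h : HasDecreasingSublist S m w) (hw : w <+ w') : HasDecreasingSublist S m w' :=
  let ⟨d, hd, hdec, hS, hlen⟩ := h
  ⟨d, hd.trans hw, hdec, hS, hlen⟩

theorem HasDecreasingSublist.mono {S T : Set α} {m : ℕ} {w : List α}
    (h : HasDecreasingSublist S m w) (hST : S ⊆ T) : HasDecreasingSublist T m w :=
  let ⟨d, hd, hdec, hS, hlen⟩ := h
  ⟨d, hd, hdec, fun x hx => hST (hS x hx), hlen⟩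

theorem hasDecreasingSublist_inter_iff {S T : Set α} {m : ℕ} {w : List α}
    (hw : ∀ x ∈ w, x ∈ T) : HasDecreasingSublist (S ∩ T) m w ↔ HasDecreasingSublist S m w := by
  refine ⟨fun h => h.mono inter_subset_left, fun ⟨d, hd, hdec, hS, hlen⟩ => ?_⟩
  exact ⟨d, hd, hdec, fun x hx => ⟨hS x hx, hw x (hd.subset hx)⟩, hlen⟩

theorem HasDecreasingSublist.le_ncard {S : Set α} {m : ℕ} {w : List α}
    (h : HasDecreasingSublist S m w) (hS : S.Finite) : m ≤ S.ncard := by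
  classical
  obtain ⟨d, -, hdec, hdS, rfl⟩ := h
  rw [← List.toFinset_card_of_nodup (hdec.imp ne_of_gt), ← ncard_coe_finset]
  exact ncard_le_ncard (fun x hx => hdS x (by simpa using hx)) hS

theorem hasDecreasingSublist_cons_iff {S : Set α} {m : ℕ} {x : α} {w : List α} :
    HasDecreasingSublist S (m + 1) (x :: w) ↔
      HasDecreasingSublist S (m + 1) w ∨ x ∈ S ∧ HasDecreasingSublist (S ∩ Iio x) m w := by
  refine ⟨?_, ?_⟩
  · rintro ⟨d, hd, hdec, hdS, hlen⟩
    rcases List.sublist_cons_iff.1 hd with hd | ⟨d', rfl, hd'⟩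
    · exact Or.inl ⟨d, hd, hdec, hdS, hlen⟩
    · rw [List.pairwise_cons] at hdec
      refine Or.inr ⟨hdS x (by simp), d', hd', hdec.2,
        fun y hy => ⟨hdS y (by simp [hy]), hdec.1 y hy⟩, by simpa using hlen⟩
  · rintro (h | ⟨hx, d, hd, hdec, hdS, rfl⟩)
    · exact h.of_sublist (List.sublist_cons_self x w)
    · refine ⟨x :: d, hd.cons_cons x, List.pairwise_cons.2 ⟨fun y hy => (hdS y hy).2, hdec⟩,
        ?_, rfl⟩
      simpa [hx] using fun y hy => (hdS y hy).1

theorem hasDecreasingSublist_append_iff {S : Set α} {m : ℕ} {w₁ w₂ : List α} :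
    HasDecreasingSublist S m (w₁ ++ w₂) ↔ HasDecreasingSublist S m w₁ ∨
      ∃ z m₁ m₂, m₁ + m₂ = m ∧ HasDecreasingSublist (S ∩ Ioi z) m₁ w₁ ∧
        HasDecreasingSublist (S ∩ Iic z) m₂ w₂ := by
  refine ⟨?_, ?_⟩
  · rintro ⟨d, hd, hdec, hdS, rfl⟩
    obtain ⟨d₁, d₂, rfl, hd₁, hd₂⟩ := List.sublist_append_iff.1 hd
    rw [List.pairwise_append] at hdec
    cases d₂ with
    | nil => exact Or.inl ⟨d₁, hd₁, hdec.1, fun x hx => hdS x (by simp [hx]), by simp⟩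
    | cons z d₂ =>
      refine Or.inr ⟨z, d₁.length, (z :: d₂).length, by simp, ⟨d₁, hd₁, hdec.1, fun x hx =>
        ⟨hdS x (by simp [hx]), hdec.2.2 x hx z (by simp)⟩, rfl⟩, ⟨z :: d₂, hd₂, hdec.2.1,
        fun x hx => ⟨hdS x (by simp [hx]), ?_⟩, rfl⟩⟩
      rcases List.mem_cons.1 hx with rfl | hx
      · exact le_refl x
      · exact ((List.pairwise_cons.1 hdec.2.1).1 x hx).le
  · rintro (h | ⟨z, m₁, m₂, rfl, ⟨d₁, hd₁, hdec₁, hdS₁, rfl⟩, ⟨d₂, hd₂, hdec₂, hdS₂, rfl⟩⟩)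
    · exact h.of_sublist (List.sublist_append_left w₁ w₂)
    · refine ⟨d₁ ++ d₂, hd₁.append hd₂, List.pairwise_append.2 ⟨hdec₁, hdec₂, ?_⟩, ?_, by simp⟩
      · exact fun x hx y hy => lt_of_le_of_lt (hdS₂ y hy).2 (hdS₁ x hx).2
      · simp only [List.mem_append]
        rintro x (hx | hx)
        exacts [(hdS₁ x hx).1, (hdS₂ x hx).1]

theorem hasDecreasingSublist_append_of_pairwise_lt {S : Set α} {m : ℕ} {u w : List α}
    (hu : u.Pairwise (· < ·)) (h : HasDecreasingSublist S (m + 1) (u ++ w)) :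
    HasDecreasingSublist S (m + 1) w ∨
      ∃ y ∈ u, y ∈ S ∧ HasDecreasingSublist (S ∩ Iio y) m w := by
  obtain ⟨d, hd, hdec, hdS, hlen⟩ := h
  obtain ⟨d₁, d₂, rfl, hd₁, hd₂⟩ := List.sublist_append_iff.1 hd
  rw [List.pairwise_append] at hdec
  match d₁, hd₁, hdec with
  | [], _, hdec =>
    exact Or.inl ⟨d₂, hd₂, hdec.2.1, fun x hx => hdS x (by simp [hx]), by simpa using hlen⟩
  | [y], hd₁, hdec =>
    exact Or.inr ⟨y, List.singleton_sublist.1 hd₁, hdS y (by simp), d₂, hd₂, hdec.2.1,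
      fun x hx => ⟨hdS x (by simp [hx]), hdec.2.2 y (by simp) x hx⟩, by simpa using hlen⟩
  | y :: y' :: _, hd₁, hdec =>
    have hlt := List.rel_of_pairwise_cons (hu.sublist hd₁) (List.mem_cons_self ..)
    exact absurd (List.rel_of_pairwise_cons hdec.1 (List.mem_cons_self ..)) (not_lt.2 hlt.le)

end DecreasingSublist

section DecreasingCon

variable {α : Type*} [LinearOrder α]

variable (α) in
def decreasingCon : Con (FreeMonoid α) where
  r w w' := ∀ S : Set α, S.OrdConnected → ∀ m,
    HasDecreasingSublist S m w.toList ↔ HasDecreasingSublist S m w'.toList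
  iseqv := ⟨fun _ _ _ _ => Iff.rfl, fun h S hS m => (h S hS m).symm,
    fun h₁ h₂ S hS m => (h₁ S hS m).trans (h₂ S hS m)⟩
  mul' h₁ h₂ S hS m := by
    simp only [FreeMonoid.toList_mul, hasDecreasingSublist_append_iff, h₁ S hS,
      fun z => h₁ _ (hS.inter (ordConnected_Ioi (a := z))),
      fun z => h₂ _ (hS.inter (ordConnected_Iic (a := z)))]

theorem decreasingCon_knuth₁ {a b c : α} (hab : a ≤ b) (hbc : b < c) :
    decreasingCon α (.of a * .of c * .of b) (.of c * .of a * .of b) := by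
  intro S hS m
  have hbS : a ∈ S → c ∈ S → b ∈ S := fun ha hc => hS.out ha hc ⟨hab, hbc.le⟩
  simp only [FreeMonoid.toList_mul, FreeMonoid.toList_of, List.cons_append, List.nil_append]
  rcases m with _ | _ | _ | m <;>
    simp only [hasDecreasingSublist_zero, hasDecreasingSublist_cons_iff,
      hasDecreasingSublist_nil_iff, mem_inter_iff, mem_Iio] <;>
    grind

theorem decreasingCon_knuth₂ {a b c : α} (hab : a < b) (hbc : b ≤ c) :
    decreasingCon α (.of b * .of a * .of c) (.of b * .of c * .of a) := by
  intro S hS m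
  have hbS : a ∈ S → c ∈ S → b ∈ S := fun ha hc => hS.out ha hc ⟨hab.le, hbc⟩
  simp only [FreeMonoid.toList_mul, FreeMonoid.toList_of, List.cons_append, List.nil_append]
  rcases m with _ | _ | _ | m <;>
    simp only [hasDecreasingSublist_zero, hasDecreasingSublist_cons_iff,
      hasDecreasingSublist_nil_iff, mem_inter_iff, mem_Iio] <;>
    grind

theorem decreasingCon_idem (a : α) : decreasingCon α (.of a * .of a) (.of a) := by
  intro S _ m
  simp only [FreeMonoid.toList_mul, FreeMonoid.toList_of, List.cons_append, List.nil_append]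
  rcases m with _ | _ | m <;>
    simp only [hasDecreasingSublist_zero, hasDecreasingSublist_cons_iff,
      hasDecreasingSublist_nil_iff, mem_inter_iff, mem_Iio] <;>
    grind

end DecreasingCon

theorem stylCon_le_decreasingCon (n : ℕ) : stylCon n ≤ decreasingCon (Fin n) :=
  Con.conGen_le.2 fun _ _ h => match h with
    | .knuth₁ _ _ _ hab hbc => decreasingCon_knuth₁ hab hbc
    | .knuth₂ _ _ _ hab hbc => decreasingCon_knuth₂ hab hbc
    | .idem a => decreasingCon_idem a

section Codes

variable {α : Type*} {k : ℕ} {f : Fin k → α}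

def codesFrom (f : Fin k → α) (j : ℕ) : Set α := f '' {i | j ≤ (i : ℕ)}

theorem mem_codesFrom (hf : f.Injective) {i : Fin k} {j : ℕ} : f i ∈ codesFrom f j ↔ j ≤ i :=
  hf.mem_set_image

theorem ncard_codesFrom (hf : f.Injective) (j : ℕ) : (codesFrom f j).ncard = k - j := by
  have hval : Fin.val '' {i : Fin k | j ≤ (i : ℕ)} = Ico j k := by
    ext l
    exact ⟨fun ⟨i, hi, hl⟩ => hl ▸ ⟨hi, i.2⟩, fun ⟨hjl, hlk⟩ => ⟨⟨l, hlk⟩, hjl, rfl⟩⟩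
  rw [codesFrom, ncard_image_of_injective _ hf, ← ncard_image_of_injective _ Fin.val_injective,
    hval, ← Finset.coe_Ico, ncard_coe_finset, Nat.card_Ico]

variable [LinearOrder α]

theorem codesFrom_inter_Iio (hf : StrictAnti f) {j : ℕ} {i : Fin k} (hi : j ≤ i) :
    codesFrom f j ∩ Iio (f i) = codesFrom f (i + 1) := by
  ext y
  simp only [codesFrom, mem_inter_iff, mem_image, mem_ofPred_eq, mem_Iio]
  constructor
  · rintro ⟨⟨l, -, rfl⟩, hl⟩
    exact ⟨l, hf.lt_iff_gt.1 hl, rfl⟩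
  · rintro ⟨l, hl, rfl⟩
    exact ⟨⟨l, by omega, rfl⟩, hf (Fin.lt_def.2 hl)⟩

end Codes

section Encoding

variable {σ α : Type*} [DecidableEq σ] {t : List σ} {f : Fin t.length → α}

variable (t) in
def occurrenceCodes (f : Fin t.length → α) (x : σ) : List α :=
  ((List.finRange t.length).reverse.filter fun i => t[i] = x).map f

theorem mem_occurrenceCodes {x : σ} {y : α} :
    y ∈ occurrenceCodes t f x ↔ ∃ i, t[i] = x ∧ f i = y := by
  simp [occurrenceCodes]

variable [LinearOrder α]

theorem pairwise_lt_occurrenceCodes (hf : StrictAnti f) (x : σ) :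
    (occurrenceCodes t f x).Pairwise (· < ·) := by
  refine List.pairwise_map.2 (List.Pairwise.filter _ ?_)
  exact List.pairwise_reverse.2 ((List.sortedLT_finRange _).pairwise.imp fun h => hf h)

theorem drop_sublist_iff_hasDecreasingSublist (hf : StrictAnti f) (w : List σ) (j : ℕ) :
    t.drop j <+ w ↔
      HasDecreasingSublist (codesFrom f j) (t.length - j) (w.flatMap (occurrenceCodes t f)) := by
  induction w generalizing j with
  | nil =>
    simp only [List.sublist_nil, List.drop_eq_nil_iff, List.flatMap_nil,
      hasDecreasingSublist_nil_iff]
    omega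
  | cons x w ih =>
    rw [List.flatMap_cons]
    obtain hj | hj := le_or_gt t.length j
    · simp [List.drop_eq_nil_of_le hj, Nat.sub_eq_zero_of_le hj, hasDecreasingSublist_zero]
    have hdrop : t.drop j = t[j] :: t.drop (j + 1) := List.drop_eq_getElem_cons hj
    have hlen : t.length - j = t.length - (j + 1) + 1 := by omega
    have hcodes : codesFrom f j ∩ Iio (f ⟨j, hj⟩) = codesFrom f (j + 1) :=
      codesFrom_inter_Iio hf le_rfl
    constructor
    · intro h
      obtain h | ⟨r, hr, h⟩ := List.sublist_cons_iff.1 h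
      · exact ((ih j).1 h).of_sublist (List.sublist_append_right _ _)
      · rw [hdrop, List.cons.injEq] at hr
        obtain ⟨hx, rfl⟩ := hr
        have hmem : f ⟨j, hj⟩ ∈ occurrenceCodes t f x := mem_occurrenceCodes.2 ⟨_, hx, rfl⟩
        rw [hlen]
        refine (hasDecreasingSublist_cons_iff.2 (Or.inr ⟨(mem_codesFrom hf.injective).2 le_rfl,
          ?_⟩)).of_sublist ((List.singleton_sublist.2 hmem).append (List.Sublist.refl _))
        exact hcodes ▸ (ih (j + 1)).1 h
    · rw [hlen]
      intro h
      obtain h | ⟨y, hy, hyS, h⟩ := hasDecreasingSublist_append_of_pairwise_lt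
        (pairwise_lt_occurrenceCodes hf x) h
      · exact ((ih j).2 (hlen ▸ h)).cons x
      obtain ⟨l, hl, rfl⟩ := mem_occurrenceCodes.1 hy
      have hjl : j ≤ l := (mem_codesFrom hf.injective).1 hyS
      rw [codesFrom_inter_Iio hf hjl] at h
      have := h.le_ncard ((toFinite _).image f)
      rw [ncard_codesFrom hf.injective] at this
      obtain rfl : l = ⟨j, hj⟩ := Fin.ext (show (l : ℕ) = j by have := l.isLt; omega)
      rw [hdrop, ← hl]
      exact ((ih (j + 1)).2 h).cons_cons _

end Encoding

theorem sublist_iff_hasDecreasingSublist_flatMap {σ α : Type*} [DecidableEq σ] [LinearOrder α]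
    {t : List σ} {f : Fin t.length → α} (hf : StrictAnti f) (w : List σ) :
    t <+ w ↔ HasDecreasingSublist univ t.length (w.flatMap (occurrenceCodes t f)) := by
  have hcodes : ∀ y ∈ w.flatMap (occurrenceCodes t f), y ∈ codesFrom f 0 := by
    intro y hy
    obtain ⟨x, -, hy⟩ := List.mem_flatMap.1 hy
    obtain ⟨i, -, rfl⟩ := mem_occurrenceCodes.1 hy
    exact (mem_codesFrom hf.injective).2 (Nat.zero_le _)
  rw [← hasDecreasingSublist_inter_iff hcodes, univ_inter]
  simpa using drop_sublist_iff_hasDecreasingSublist hf w 0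

theorem FreeMonoid.toList_lift_ofList {σ β : Type*} (g : σ → List β) (w : FreeMonoid σ) :
    ((FreeMonoid.lift fun x => FreeMonoid.ofList (g x)) w).toList = w.toList.flatMap g := by
  simp [FreeMonoid.lift_apply, FreeMonoid.toList_prod, List.flatMap, Function.comp_def]

theorem sublist_of_satisfies_styl {n : ℕ} {σ : Type*} {u v : FreeMonoid σ}
    (h : Satisfies (Styl n) u v) {t : List σ} (ht : t.length ≤ n) (hu : t <+ u.toList) :
    t <+ v.toList := by
  classical
  let f : Fin t.length → Fin n := fun i => (Fin.castLE ht i).rev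
  have hf : StrictAnti f := fun i j hij => Fin.rev_lt_rev.2 hij
  let φ := FreeMonoid.lift fun x => FreeMonoid.ofList (occurrenceCodes t f x)
  have hφ : decreasingCon (Fin n) (φ u) (φ v) :=
    stylCon_le_decreasingCon n ((Con.eq _).1 (h ((stylCon n).mk'.comp φ)))
  rw [sublist_iff_hasDecreasingSublist_flatMap hf] at hu ⊢
  rw [← FreeMonoid.toList_lift_ofList] at hu ⊢
  exact (hφ univ ordConnected_univ _).1 hu

theorem styl_satisfies_implies_Jn_general
    (n : ℕ) (σ : Type*) (u v : FreeMonoid σ) :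
    (Satisfies (Styl n) u v →
      ∀ t : List σ, t.length ≤ n →
        (t.Sublist (FreeMonoid.toList u) ↔ t.Sublist (FreeMonoid.toList v))) ∧
    ((∃ t : List σ, t.length ≤ n ∧
        ¬ (t.Sublist (FreeMonoid.toList u) ↔ t.Sublist (FreeMonoid.toList v))) →
      ∃ φ : FreeMonoid σ →* Styl n, φ u ≠ φ v) := by
  have sublist_iff (h : Satisfies (Styl n) u v) (t : List σ) (ht : t.length ≤ n) :
      t <+ u.toList ↔ t <+ v.toList :=
    ⟨sublist_of_satisfies_styl h ht, sublist_of_satisfies_styl (fun φ => (h φ).symm) ht⟩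
  refine ⟨sublist_iff, fun ⟨t, ht, hne⟩ => ?_⟩
  by_contra! h
  exact hne (sublist_iff h t ht)

/-- If `styl_n` satisfies `u ≈ v` then `u` and `v` have the same subsequences of
length at most `n`; equivalently, if some word of length `≤ n` is a subsequence of one but not
the other, then some evaluation in `styl_n` separates `u` and `v`. -/
theorem styl_satisfies_implies_Jn
    (n : ℕ) (hn : 1 ≤ n) (σ : Type*) (u v : FreeMonoid σ) :
    (Satisfies (Styl n) u v →
      ∀ t : List σ, t.length ≤ n →
        (t.Sublist (FreeMonoid.toList u) ↔ t.Sublist (FreeMonoid.toList v))) ∧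
    ((∃ t : List σ, t.length ≤ n ∧
        ¬ (t.Sublist (FreeMonoid.toList u) ↔ t.Sublist (FreeMonoid.toList v))) →
      ∃ φ : FreeMonoid σ →* Styl n, φ u ≠ φ v) :=
  styl_satisfies_implies_Jn_general n σ u v
end

section
/- Let n ≥ 1. Every monoid identity satisfied by styl_{n+1} is also satisfied by styl_n, and there exists a monoid identity that is satisfied by styl_n but not by styl_{n+1}. Hence the variety generated by styl_n is strictly contained in the variety generated by styl_{n+1}. -/
theorem List.exists_eq_append_descent {α : Type*} [LinearOrder α] :
    ∀ {v : List α}, ¬ v.Pairwise (· ≤ ·) →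
      ∃ p y x r, v = p ++ y :: x :: r ∧ x < y ∧ (x :: r).Pairwise (· ≤ ·)
  | [], h => absurd List.Pairwise.nil h
  | a :: v, h => by
    by_cases hv : v.Pairwise (· ≤ ·)
    · rcases v with _ | ⟨b, v⟩
      · exact absurd (List.pairwise_singleton _ a) h
      · have hba : b < a := by
          by_contra! hab
          refine h (List.pairwise_cons.2 ⟨fun c hc => ?_, hv⟩)
          rcases List.mem_cons.1 hc with rfl | hc
          exacts [hab, hab.trans ((List.pairwise_cons.1 hv).1 c hc)]
        exact ⟨[], a, b, v, rfl, hba, hv⟩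
    · obtain ⟨p, y, x, r, rfl, hxy, hxr⟩ := List.exists_eq_append_descent hv
      exact ⟨a :: p, y, x, r, rfl, hxy, hxr⟩

theorem List.sublist_three {α : Type*} {a b c : α} {l : List α} (h : l.Sublist [a, b, c]) :
    l = [] ∨ l = [a] ∨ l = [b] ∨ l = [a, b] ∨ l = [c] ∨ l = [a, c] ∨ l = [b, c] ∨
      l = [a, b, c] := by
  simpa [List.sublists] using List.mem_sublists.2 h

namespace FreeMonoid

variable {α : Type*}

theorem mem_toList_pow {x : FreeMonoid α} {a : α} :
    ∀ {k : ℕ}, a ∈ (x ^ k).toList → a ∈ x.toList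
  | 0, h => by simp at h
  | k + 1, h => by
    rw [pow_succ', toList_mul, List.mem_append] at h
    exact h.elim id mem_toList_pow

theorem sublist_toList_pow {x : FreeMonoid α} :
    ∀ {k : ℕ} {l : List α}, l ⊆ x.toList → l.length ≤ k → l.Sublist (x ^ k).toList
  | _, [], _, _ => List.nil_sublist _
  | k + 1, a :: l, hl, hk => by
    rw [pow_succ', toList_mul]
    exact List.singleton_append (x := a) ▸ (List.singleton_sublist.2 (hl (by simp))).append
      (sublist_toList_pow (List.cons_subset.1 hl).2 (by simpa using hk))

theorem length_le_of_sublist_toList_pow [LinearOrder α] {x : FreeMonoid α}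
    (hx : x.toList.Pairwise (· < ·)) :
    ∀ {k : ℕ} {l : List α}, l.Sublist (x ^ k).toList → l.Pairwise (· > ·) → l.length ≤ k
  | 0, l, hl, _ => by simp_all
  | k + 1, l, hl, hdec => by
    rw [pow_succ', toList_mul] at hl
    obtain ⟨l₁, l₂, rfl, h₁, h₂⟩ := List.sublist_append_iff.1 hl
    have hl₁ : l₁.length ≤ 1 := by
      match l₁, hx.sublist h₁, hdec.sublist (List.sublist_append_left l₁ l₂) with
      | [], _, _ | [_], _, _ => simp
      | a :: b :: _, hinc, hdec => simp at hinc hdec; order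
    have := length_le_of_sublist_toList_pow hx h₂ (hdec.sublist (List.sublist_append_right l₁ l₂))
    simp only [List.length_append]
    omega

end FreeMonoid

section

variable {n : ℕ}

def StylEquiv (x y : List (Fin n)) : Prop :=
  stylCon n (FreeMonoid.ofList x) (FreeMonoid.ofList y)

infix:50 " ≡ₛ " => StylEquiv

namespace StylEquiv

@[refl]
theorem refl (x : List (Fin n)) : x ≡ₛ x := (stylCon n).refl _

theorem symm {x y : List (Fin n)} (h : x ≡ₛ y) : y ≡ₛ x := (stylCon n).symm h

theorem trans {x y z : List (Fin n)} (h : x ≡ₛ y) (h' : y ≡ₛ z) : x ≡ₛ z := (stylCon n).trans h h'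

instance : @Trans (List (Fin n)) (List (Fin n)) (List (Fin n)) StylEquiv StylEquiv StylEquiv :=
  ⟨trans⟩

theorem append {x y x' y' : List (Fin n)} (h : x ≡ₛ y) (h' : x' ≡ₛ y') :
    x ++ x' ≡ₛ y ++ y' :=
  (stylCon n).mul h h'

theorem append_left (p : List (Fin n)) {x y : List (Fin n)} (h : x ≡ₛ y) : p ++ x ≡ₛ p ++ y :=
  (refl p).append h

theorem append_right (q : List (Fin n)) {x y : List (Fin n)} (h : x ≡ₛ y) : x ++ q ≡ₛ y ++ q :=
  h.append (refl q)

theorem cons (a : Fin n) {x y : List (Fin n)} (h : x ≡ₛ y) : a :: x ≡ₛ a :: y :=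
  h.append_left [a]

theorem replace (p q : List (Fin n)) {x y : List (Fin n)} (h : x ≡ₛ y) :
    p ++ x ++ q ≡ₛ p ++ y ++ q :=
  (h.append_left p).append_right q

theorem of_stylRel {x y : FreeMonoid (Fin n)} (h : StylRel n x y) : x.toList ≡ₛ y.toList :=
  ConGen.Rel.of _ _ h

theorem knuth₁ {a b c : Fin n} (hab : a ≤ b) (hbc : b < c) : [a, c, b] ≡ₛ [c, a, b] :=
  of_stylRel (.knuth₁ a b c hab hbc)

theorem knuth₂ {a b c : Fin n} (hab : a < b) (hbc : b ≤ c) : [b, a, c] ≡ₛ [b, c, a] :=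
  of_stylRel (.knuth₂ a b c hab hbc)

theorem idem (a : Fin n) : [a, a] ≡ₛ [a] :=
  of_stylRel (.idem a)

theorem cons_append_singleton_of_sorted (t : Fin n) {v : List (Fin n)}
    (hv : v.Pairwise (· ≤ ·)) (hlt : ∀ a ∈ v, a < t) : t :: v ++ [t] ≡ₛ t :: v := by
  induction v with
  | nil => exact idem t
  | cons x v ih =>
    have hxt : x < t := hlt x (by simp)
    rcases v with _ | ⟨z, v⟩
    · calc [t, x, t] ≡ₛ [t, t, x] := knuth₂ hxt le_rfl
        _ ≡ₛ [t, x] := (idem t).append_right [x]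
    · have hxz : x ≤ z := (List.pairwise_cons.1 hv).1 z (by simp)
      have hk : [x, t, z] ≡ₛ [t, x, z] := knuth₁ hxz (hlt z (by simp))
      calc t :: x :: z :: v ++ [t] ≡ₛ x :: t :: z :: v ++ [t] := hk.symm.append_right (v ++ [t])
        _ ≡ₛ x :: t :: z :: v :=
          (ih (List.pairwise_cons.1 hv).2 fun a ha => hlt a (by simp_all)).cons x
        _ ≡ₛ t :: x :: z :: v := hk.append_right v

theorem cons_append_singleton_congr {t : Fin n} {v v' : List (Fin n)} (hv : v ≡ₛ v')
    (h : t :: v' ++ [t] ≡ₛ t :: v') : t :: v ++ [t] ≡ₛ t :: v :=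
  calc t :: v ++ [t] ≡ₛ t :: v' ++ [t] := (hv.cons t).append_right [t]
    _ ≡ₛ t :: v' := h
    _ ≡ₛ t :: v := (hv.cons t).symm

theorem cons_append_singleton_of_descent (t : Fin n) {L : ℕ}
    (ih : ∀ w : List (Fin n), w.length < L → (∀ a ∈ w, a < t) → t :: w ++ [t] ≡ₛ t :: w) :
    ∀ {r p : List (Fin n)} {y x : Fin n}, (p ++ y :: x :: r).length = L →
      (∀ a ∈ p ++ y :: x :: r, a < t) → x < y → (x :: r).Pairwise (· ≤ ·) →
      t :: (p ++ y :: x :: r) ++ [t] ≡ₛ t :: (p ++ y :: x :: r) := by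
  intro r
  induction r with
  | nil =>
    intro p y x hL hlt hxy _
    have hp : t :: (p ++ [y]) ++ [t] ≡ₛ t :: (p ++ [y]) :=
      ih _ (by simp at hL ⊢; omega) fun a ha => hlt a (by simp at ha ⊢; tauto)
    calc t :: (p ++ [y, x]) ++ [t] ≡ₛ t :: p ++ [y, t, x] := by
          simpa using (knuth₂ hxy (hlt y (by simp)).le).append_left (t :: p)
      _ ≡ₛ t :: (p ++ [y]) ++ [x] := by simpa using hp.append_right [x]
      _ = t :: (p ++ [y, x]) := by simp
  | cons z r ihr =>
    intro p y x hL hlt hxy hxr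
    have hxz : x ≤ z := (List.pairwise_cons.1 hxr).1 z (by simp)
    have hzr : (z :: r).Pairwise (· ≤ ·) := (List.pairwise_cons.1 hxr).2
    -- move the descent one step to the right, until it meets the final `t`
    by_cases hyz : y ≤ z
    · refine cons_append_singleton_congr (v' := (p ++ [y]) ++ z :: x :: r) ?_
        (ihr ?_ ?_ (hxy.trans_le hyz) ?_)
      · simpa using replace p r (knuth₂ hxy hyz)
      · simp [← hL]
      · intro a ha; exact hlt a (by simp at ha ⊢; tauto)
      · exact hxr.sublist (.cons_cons x (.cons z (.refl r)))
    · have hzy : z < y := lt_of_not_ge hyz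
      refine cons_append_singleton_congr (v' := (p ++ [x]) ++ y :: z :: r) ?_
        (ihr ?_ ?_ hzy hzr)
      · simpa using replace p r (knuth₁ hxz hzy).symm
      · simp [← hL]
      · intro a ha; exact hlt a (by simp at ha ⊢; tauto)

theorem cons_append_singleton_of_lt (t : Fin n) {v : List (Fin n)} (hlt : ∀ a ∈ v, a < t) :
    t :: v ++ [t] ≡ₛ t :: v := by
  by_cases hv : v.Pairwise (· ≤ ·)
  · exact cons_append_singleton_of_sorted t hv hlt
  · obtain ⟨p, y, x, r, rfl, hxy, hxr⟩ := List.exists_eq_append_descent hv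
    exact cons_append_singleton_of_descent t (fun w _ hw => cons_append_singleton_of_lt t hw)
      rfl hlt hxy hxr
termination_by v.length

theorem cons_filter_ne (t : Fin n) {v : List (Fin n)} (hle : ∀ a ∈ v, a ≤ t) :
    t :: v ≡ₛ t :: v.filter (· ≠ t) := by
  induction v using List.reverseRecOn with
  | nil => rfl
  | append_singleton w a ih =>
    have hw := (ih fun b hb => hle b (by simp [hb])).append_right [a]
    by_cases ha : a = t
    · subst ha
      calc a :: (w ++ [a]) ≡ₛ a :: w.filter (· ≠ a) ++ [a] := hw
        _ ≡ₛ a :: w.filter (· ≠ a) := cons_append_singleton_of_lt a fun b hb => by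
          rw [List.mem_filter] at hb
          exact lt_of_le_of_ne (hle b (by simp [hb.1])) (by simpa using hb.2)
        _ = a :: (w ++ [a]).filter (· ≠ a) := by simp
    · simpa [List.filter_append, ha] using hw

theorem cons_of_mem {Z : List (Fin n)} (hZ : Z.Pairwise (· > ·)) {c : Fin n} (hc : c ∈ Z) :
    c :: Z ≡ₛ Z := by
  induction Z with
  | nil => simp at hc
  | cons z Z ih =>
    rcases List.mem_cons.1 hc with rfl | hc
    · exact (idem c).append_right Z
    · rcases Z with _ | ⟨z₂, Z⟩
      · simp at hc
      · have hcz₂ : c ≤ z₂ := by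
          rcases List.mem_cons.1 hc with rfl | hc
          exacts [le_rfl, ((List.pairwise_cons.1 (List.pairwise_cons.1 hZ).2).1 c hc).le]
        have hz₂z : z₂ < z := (List.pairwise_cons.1 hZ).1 z₂ (by simp)
        calc c :: z :: z₂ :: Z ≡ₛ z :: c :: z₂ :: Z := (knuth₁ hcz₂ hz₂z).append_right Z
          _ ≡ₛ z :: z₂ :: Z := (ih (List.pairwise_cons.1 hZ).2 hc).cons z

theorem append_of_subset {Z : List (Fin n)} (hZ : Z.Pairwise (· > ·)) :
    ∀ {u : List (Fin n)}, u ⊆ Z → u ++ Z ≡ₛ Z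
  | [], _ => refl Z
  | a :: u, hu =>
    calc a :: u ++ Z ≡ₛ a :: Z := (append_of_subset hZ (List.cons_subset.1 hu).2).cons a
      _ ≡ₛ Z := cons_of_mem hZ (List.cons_subset.1 hu).1

theorem of_sublist_of_subset {Z : List (Fin n)} (hZ : Z.Pairwise (· > ·)) :
    ∀ {u : List (Fin n)}, Z.Sublist u → u ⊆ Z → u ≡ₛ Z := by
  induction Z with
  | nil => intro u _ hu; rw [List.subset_nil.1 hu]
  | cons z Z ih =>
    intro u hsub hu
    obtain ⟨u₀, v, rfl, hZv⟩ : ∃ u₀ v, u = u₀ ++ z :: v ∧ Z.Sublist v := by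
      obtain ⟨r₁, r₂, rfl, hz, hZ⟩ := List.cons_sublist_iff.1 hsub
      obtain ⟨s, s', rfl⟩ := List.append_of_mem hz
      exact ⟨s, s' ++ r₂, by simp, hZ.trans (List.sublist_append_right _ _)⟩
    have hzZ : z ∉ Z := fun h => lt_irrefl z ((List.pairwise_cons.1 hZ).1 z h)
    have hvZ : ∀ a ∈ v, a ∈ z :: Z := fun a ha => hu (by simp [ha])
    have hv : v.filter (· ≠ z) ≡ₛ Z := by
      have hZz : Z.filter (· ≠ z) = Z :=
        List.filter_eq_self.2 fun a ha => by simpa using ne_of_mem_of_not_mem ha hzZ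
      refine ih (List.pairwise_cons.1 hZ).2 (hZz ▸ hZv.filter _) fun a ha => ?_
      rw [List.mem_filter] at ha
      exact (List.mem_cons.1 (hvZ a ha.1)).resolve_left (by simpa using ha.2)
    calc u₀ ++ z :: v ≡ₛ u₀ ++ z :: v.filter (· ≠ z) := by
          refine (cons_filter_ne z fun a ha => ?_).append_left u₀
          rcases List.mem_cons.1 (hvZ a ha) with rfl | ha
          exacts [le_rfl, ((List.pairwise_cons.1 hZ).1 a ha).le]
      _ ≡ₛ u₀ ++ z :: Z := (hv.cons z).append_left u₀
      _ ≡ₛ z :: Z := append_of_subset hZ fun a ha => hu (by simp [ha])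

theorem toList_pow_of_le {k : ℕ} (x : FreeMonoid (Fin n)) (hk : n ≤ k) :
    (x ^ k).toList ≡ₛ x.toList.toFinset.sort (· ≥ ·) := by
  refine of_sublist_of_subset (Finset.sortedGT_sort _).pairwise ?_ fun a ha => ?_
  · refine FreeMonoid.sublist_toList_pow (fun a ha => ?_) ?_
    · simpa using ha
    · simpa using (Finset.card_le_univ _).trans (by simpa using hk)
  · simpa using FreeMonoid.mem_toList_pow ha

end StylEquiv

end

theorem Styl.pow_eq_pow_succ {n : ℕ} (g : Styl n) : g ^ n = g ^ (n + 1) := by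
  obtain ⟨x, rfl⟩ := Con.mk'_surjective g
  rw [← map_pow, ← map_pow, Con.coe_mk', Con.eq]
  exact (StylEquiv.toList_pow_of_le x le_rfl).trans (StylEquiv.toList_pow_of_le x n.le_succ).symm

namespace List

variable {α : Type*} [LinearOrder α]

def HasDecreasingSublist (w : List α) (k : ℕ) : Prop :=
  ∃ l : List α, l.Sublist w ∧ l.Pairwise (· > ·) ∧ l.length = k

/-- The two bound conditions are what let `l'` replace `l` inside any longer decreasing subword. -/
def DecreasingSublistsEmbed (x y : List α) : Prop :=
  ∀ l : List α, l.Sublist x → l.Pairwise (· > ·) → ∃ l' : List α, l'.Sublist y ∧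
    l'.Pairwise (· > ·) ∧ l'.length = l.length ∧
    (∀ a, (∀ b ∈ l, b < a) → ∀ b ∈ l', b < a) ∧ (∀ a, (∀ b ∈ l, a < b) → ∀ b ∈ l', a < b)

theorem HasDecreasingSublist.of_embed {x y : List α} (h : DecreasingSublistsEmbed x y)
    (p q : List α) {k : ℕ} : (p ++ x ++ q).HasDecreasingSublist k →
      (p ++ y ++ q).HasDecreasingSublist k := by
  rintro ⟨l, hsub, hl, rfl⟩
  rw [append_assoc] at hsub
  obtain ⟨l₁, l₂₃, rfl, h₁, h₂₃⟩ := sublist_append_iff.1 hsub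
  obtain ⟨l₂, l₃, rfl, h₂, h₃⟩ := sublist_append_iff.1 h₂₃
  simp only [pairwise_append, mem_append] at hl
  obtain ⟨hl₁, ⟨hl₂, hl₃, hl₂₃⟩, hl₁₂₃⟩ := hl
  obtain ⟨l₂', h₂', hl₂', hlen, hupper, hlower⟩ := h l₂ h₂ hl₂
  refine ⟨l₁ ++ (l₂' ++ l₃), by simpa using h₁.append (h₂'.append h₃), ?_, by simp [hlen]⟩
  simp only [pairwise_append, mem_append]
  refine ⟨hl₁, ⟨hl₂', hl₃, fun b hb c hc => ?_⟩, fun a ha b hb => ?_⟩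
  · exact hlower c (fun b hb => hl₂₃ b hb c hc) b hb
  · rcases hb with hb | hb
    · exact hupper a (fun b hb => hl₁₂₃ a ha b (.inl hb)) b hb
    · exact hl₁₂₃ a ha b (.inr hb)

theorem DecreasingSublistsEmbed.of_sublist {x y : List α}
    (h : ∀ l : List α, l.Sublist x → l.Pairwise (· > ·) → l.Sublist y) :
    DecreasingSublistsEmbed x y := fun l hl hdec =>
  ⟨l, h l hl hdec, hdec, rfl, fun _ h => h, fun _ h => h⟩

theorem decreasingSublistsEmbed_knuth₁ {a b c : α} (hab : a ≤ b) (hbc : b < c) :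
    DecreasingSublistsEmbed [a, c, b] [c, a, b] := by
  refine .of_sublist fun l hl hdec => ?_
  rcases sublist_three hl with rfl | rfl | rfl | rfl | rfl | rfl | rfl | rfl <;>
    first | (simp at hdec; order) | simp

theorem decreasingSublistsEmbed_knuth₁_symm {a b c : α} (hab : a ≤ b) (hbc : b < c) :
    DecreasingSublistsEmbed [c, a, b] [a, c, b] := by
  intro l hl hdec
  rcases sublist_three hl with rfl | rfl | rfl | rfl | rfl | rfl | rfl | rfl
  case inr.inr.inr.inl =>
    refine ⟨[c, b], by simp, by simpa using hbc, rfl, ?_⟩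
    simp only [forall_mem_cons, not_mem_nil, false_implies, implies_true, and_true]
    exact ⟨fun d h => ⟨h.1, hbc.trans h.1⟩, fun d h => ⟨h.1, h.2.trans_le hab⟩⟩
  all_goals first
    | (simp at hdec; order)
    | exact ⟨_, by simp, hdec, rfl, fun _ h => h, fun _ h => h⟩

theorem decreasingSublistsEmbed_knuth₂ {a b c : α} (hab : a < b) (hbc : b ≤ c) :
    DecreasingSublistsEmbed [b, a, c] [b, c, a] := by
  refine .of_sublist fun l hl hdec => ?_
  rcases sublist_three hl with rfl | rfl | rfl | rfl | rfl | rfl | rfl | rfl <;>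
    first | (simp at hdec; order) | simp

theorem decreasingSublistsEmbed_knuth₂_symm {a b c : α} (hab : a < b) (hbc : b ≤ c) :
    DecreasingSublistsEmbed [b, c, a] [b, a, c] := by
  intro l hl hdec
  rcases sublist_three hl with rfl | rfl | rfl | rfl | rfl | rfl | rfl | rfl
  case inr.inr.inr.inr.inr.inr.inl =>
    refine ⟨[b, a], by simp, by simpa using hab, rfl, ?_⟩
    simp only [forall_mem_cons, not_mem_nil, false_implies, implies_true, and_true]
    exact ⟨fun d h => ⟨hbc.trans_lt h.1, h.2⟩, fun d h => ⟨h.2.trans hab, h.2⟩⟩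
  all_goals first
    | (simp at hdec; order)
    | exact ⟨_, by simp, hdec, rfl, fun _ h => h, fun _ h => h⟩

theorem decreasingSublistsEmbed_idem (a : α) : DecreasingSublistsEmbed [a, a] [a] := by
  refine .of_sublist fun l hl hdec => ?_
  obtain rfl | rfl | rfl | rfl : l = [] ∨ l = [a] ∨ l = [a] ∨ l = [a, a] := by
    simpa [sublists] using mem_sublists.2 hl
  all_goals simp_all

theorem decreasingSublistsEmbed_idem_symm (a : α) : DecreasingSublistsEmbed [a] [a, a] :=
  .of_sublist fun _ hl _ => hl.trans (sublist_cons_self a [a])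

end List

def decreasingSublistCon (α : Type*) [LinearOrder α] : Con (FreeMonoid α) where
  r u v := ∀ p q : List α, ∀ k, (p ++ u.toList ++ q).HasDecreasingSublist k ↔
    (p ++ v.toList ++ q).HasDecreasingSublist k
  iseqv := ⟨fun _ _ _ _ => .rfl, fun h p q k => (h p q k).symm,
    fun h h' p q k => (h p q k).trans (h' p q k)⟩
  mul' {u v u' v'} h h' p q k := by
    simpa only [FreeMonoid.toList_mul, List.append_assoc] using
      (h p (u'.toList ++ q) k).trans
        (by simpa only [List.append_assoc] using h' (p ++ v.toList) q k)

theorem decreasingSublistCon_of_embed {α : Type*} [LinearOrder α] {x y : List α}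
    (h : x.DecreasingSublistsEmbed y) (h' : y.DecreasingSublistsEmbed x) :
    decreasingSublistCon α (FreeMonoid.ofList x) (FreeMonoid.ofList y) :=
  fun p q _ => ⟨.of_embed h p q, .of_embed h' p q⟩

theorem stylCon_le_decreasingSublistCon (n : ℕ) : stylCon n ≤ decreasingSublistCon (Fin n) :=
  Con.conGen_le.2 fun x y h => by
    cases h with
    | knuth₁ a b c hab hbc =>
      exact decreasingSublistCon_of_embed (List.decreasingSublistsEmbed_knuth₁ hab hbc)
        (List.decreasingSublistsEmbed_knuth₁_symm hab hbc)
    | knuth₂ a b c hab hbc =>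
      exact decreasingSublistCon_of_embed (List.decreasingSublistsEmbed_knuth₂ hab hbc)
        (List.decreasingSublistsEmbed_knuth₂_symm hab hbc)
    | idem a =>
      exact decreasingSublistCon_of_embed (List.decreasingSublistsEmbed_idem a)
        (List.decreasingSublistsEmbed_idem_symm a)

theorem StylEquiv.hasDecreasingSublist_iff {n : ℕ} {x y : List (Fin n)} (h : x ≡ₛ y) (k : ℕ) :
    x.HasDecreasingSublist k ↔ y.HasDecreasingSublist k := by
  simpa using stylCon_le_decreasingSublistCon n h [] [] k

theorem Styl.mk'_pow_ne_pow_succ {m k : ℕ} {x : FreeMonoid (Fin m)}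
    (hx : x.toList.Pairwise (· < ·)) (hlen : x.toList.length = k + 1) :
    (stylCon m).mk' x ^ k ≠ (stylCon m).mk' x ^ (k + 1) := by
  rw [← map_pow, ← map_pow, Con.coe_mk', Ne, Con.eq]
  intro h
  obtain ⟨l, hl, hdec, hl_len⟩ := (StylEquiv.hasDecreasingSublist_iff h (k + 1)).2
    ⟨x.toList.reverse, FreeMonoid.sublist_toList_pow (k := k + 1) (fun _ => List.mem_reverse.1)
      (by simp [hlen]), List.pairwise_reverse.2 hx, by simp [hlen]⟩
  have := FreeMonoid.length_le_of_sublist_toList_pow hx hl hdec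
  omega

theorem Satisfies.of_injective {M N : Type*} [Monoid M] [Monoid N] {f : M →* N}
    (hf : Function.Injective f) {σ : Type*} {u v : FreeMonoid σ} (h : Satisfies N u v) :
    Satisfies M u v :=
  fun φ => hf (h (f.comp φ))

namespace Styl

variable {n : ℕ}

def lift {M : Type*} [Monoid M] (f : FreeMonoid (Fin n) →* M)
    (hf : ∀ x y, StylRel n x y → f x = f y) : Styl n →* M :=
  (stylCon n).lift f (Con.conGen_le.2 fun x y h => (Con.ker_rel f).2 (hf x y h))

theorem mk'_eq_of_stylRel {x y : FreeMonoid (Fin n)} (h : StylRel n x y) :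
    (stylCon n).mk' x = (stylCon n).mk' y :=
  (Con.eq _).2 (ConGen.Rel.of _ _ h)

def castSucc (n : ℕ) : Styl n →* Styl (n + 1) :=
  lift ((stylCon (n + 1)).mk'.comp (FreeMonoid.map Fin.castSucc)) fun x y h => by
    cases h with
    | knuth₁ a b c hab hbc => exact mk'_eq_of_stylRel (.knuth₁ _ _ _ hab hbc)
    | knuth₂ a b c hab hbc => exact mk'_eq_of_stylRel (.knuth₂ _ _ _ hab hbc)
    | idem a => exact mk'_eq_of_stylRel (.idem _)

def eraseLastLetter (n : ℕ) (a : Fin (n + 1)) : Styl n :=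
  if h : a.val < n then (stylCon n).mk' (.of ⟨a.val, h⟩) else 1

def eraseLast (n : ℕ) : Styl (n + 1) →* Styl n :=
  lift (FreeMonoid.lift (eraseLastLetter n)) fun x y h => by
    cases h with
    | knuth₁ a b c hab hbc =>
      simp only [map_mul, FreeMonoid.lift_eval_of]
      by_cases hc : c.val < n
      · have hb : b.val < n := Nat.lt_trans hbc hc
        simp only [eraseLastLetter, dif_pos (Nat.lt_of_le_of_lt hab hb), dif_pos hb, dif_pos hc,
          ← map_mul]
        exact mk'_eq_of_stylRel (.knuth₁ _ _ _ hab hbc)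
      · simp [eraseLastLetter, hc]
    | knuth₂ a b c hab hbc =>
      simp only [map_mul, FreeMonoid.lift_eval_of]
      by_cases hc : c.val < n
      · have hb : b.val < n := Nat.lt_of_le_of_lt hbc hc
        simp only [eraseLastLetter, dif_pos (Nat.lt_trans hab hb), dif_pos hb, dif_pos hc,
          ← map_mul]
        exact mk'_eq_of_stylRel (.knuth₂ _ _ _ hab hbc)
      · simp [eraseLastLetter, hc]
    | idem a =>
      simp only [map_mul, FreeMonoid.lift_eval_of]
      by_cases ha : a.val < n
      · simp only [eraseLastLetter, dif_pos ha, ← map_mul]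
        exact mk'_eq_of_stylRel (.idem _)
      · simp [eraseLastLetter, ha]

theorem eraseLast_comp_castSucc (n : ℕ) : (eraseLast n).comp (castSucc n) = .id _ :=
  Con.hom_ext <| FreeMonoid.hom_eq fun a => by
    show eraseLastLetter n a.castSucc = _
    simp [eraseLastLetter]

theorem castSucc_injective (n : ℕ) : Function.Injective (castSucc n) :=
  Function.LeftInverse.injective (g := eraseLast n)
    (DFunLike.congr_fun (eraseLast_comp_castSucc n))

end Styl

theorem styl_varieties_strictly_increasing_general (n : ℕ) :
    (∀ (σ : Type) (u v : FreeMonoid σ),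
      Satisfies (Styl (n + 1)) u v → Satisfies (Styl n) u v) ∧
    ∃ (σ : Type) (u v : FreeMonoid σ),
      Satisfies (Styl n) u v ∧ ¬ Satisfies (Styl (n + 1)) u v := by
  refine ⟨fun _ _ _ => Satisfies.of_injective (Styl.castSucc_injective n),
    Unit, .of () ^ n, .of () ^ (n + 1), fun φ => ?_, fun h => ?_⟩
  · simp only [map_pow, Styl.pow_eq_pow_succ]
  · have hx := Styl.mk'_pow_ne_pow_succ (x := .ofList (List.finRange (n + 1)))
      (List.pairwise_lt_finRange (n + 1)) List.length_finRange
    exact hx (by simpa using h (FreeMonoid.lift fun _ => (stylCon (n + 1)).mk' _))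

/-- Every identity satisfied by `styl_{n+1}` is satisfied by `styl_n`, and some
identity is satisfied by `styl_n` but not by `styl_{n+1}`; hence the varieties form a strictly
increasing chain. -/
theorem styl_varieties_strictly_increasing (n : ℕ) (hn : 1 ≤ n) :
    (∀ (σ : Type) (u v : FreeMonoid σ),
      Satisfies (Styl (n + 1)) u v → Satisfies (Styl n) u v) ∧
    ∃ (σ : Type) (u v : FreeMonoid σ),
      Satisfies (Styl n) u v ∧ ¬ Satisfies (Styl (n + 1)) u v :=
  styl_varieties_strictly_increasing_general n
end
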